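/- arXiv:2405.20877 — 3 statements merged into one kernel-verified Lean document; each statement's English description precedes it below -/
import Mathlib

section
/- Let α be a real roll-off factor and σ_ε > 0, and set g(ε) = sinc(ε)·cos(παε). Then the Gaussian expectation (1/√(2πσ_ε²)) ∫_{−∞}^{∞} g(ε)·(1 + 4α²ε²)·e^{−ε²/(2σ_ε²)} dε equals 1 + Σ_{m=1}^{∞} κ_m σ_ε^{2m} (2m−1)!! + 4α² Σ_{m=0}^{∞} κ_m σ_ε^{2m+2} (2m+1)!!, where both series converge. -/
open MeasureTheory

/-- The normalized sinc function: `sinc t = sin (π t) / (π t)` for `t ≠ 0`, `sinc 0 = 1`. -/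
noncomputable def sinc (t : ℝ) : ℝ :=
  if t = 0 then 1 else Real.sin (Real.pi * t) / (Real.pi * t)

/-- The Cauchy-product coefficients
`κ_m = Σ_{n=0}^m (−1)^m π^(2m) α^(2(m−n)) / ((2n+1)! (2m−2n)!)`. -/
noncomputable def kappa (α : ℝ) (m : ℕ) : ℝ :=
  ∑ n ∈ Finset.range (m + 1),
    (-1 : ℝ) ^ m * Real.pi ^ (2 * m) * α ^ (2 * (m - n)) /
      ((Nat.factorial (2 * n + 1) : ℝ) * (Nat.factorial (2 * m - 2 * n) : ℝ))

section
open Real Filter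
lemma integrable_pow_mul_gauss {b : ℝ} (hb : 0 < b) (n : ℕ) :
    Integrable (fun x : ℝ => x ^ n * Real.exp (-b * x ^ 2)) := by
  have h := integrable_rpow_mul_exp_neg_mul_sq hb (s := n) (lt_of_lt_of_le (by norm_num) (Nat.cast_nonneg n))
  simpa [Real.rpow_natCast] using h

lemma tendsto_pow_mul_gauss {b : ℝ} (hb : 0 < b) (n : ℕ) :
    Tendsto (fun x : ℝ => x ^ n * Real.exp (-b * x ^ 2)) atTop (nhds 0) := by
  have h := (rpow_mul_exp_neg_mul_sq_isLittleO_exp_neg hb n).isBigO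
  simp_rw [Real.rpow_natCast] at h
  refine h.trans_tendsto ?_
  have h1 : Tendsto (fun x : ℝ => (1/2 : ℝ) * x) atTop atTop :=
    Tendsto.const_mul_atTop (by norm_num) tendsto_id
  have h2 := tendsto_exp_neg_atTop_nhds_zero.comp h1
  have h3 : (fun x : ℝ => Real.exp (-(1/2 : ℝ) * x))
      = (fun x : ℝ => Real.exp (-x)) ∘ (fun x : ℝ => (1/2 : ℝ)*x) := by
    funext x; simp [Function.comp, neg_mul]
  rw [h3]; exact h2

lemma tendsto_pow_mul_gauss_atBot {b : ℝ} (hb : 0 < b) (m : ℕ) :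
    Tendsto (fun x : ℝ => x ^ (2*m+1) * Real.exp (-b * x ^ 2)) atBot (nhds 0) := by
  have h := (tendsto_pow_mul_gauss hb (2*m+1)).comp tendsto_neg_atBot_atTop
  have heq : (fun x : ℝ => x ^ (2*m+1) * Real.exp (-b * x ^ 2))
      = fun x : ℝ => -(((-x) ^ (2*m+1)) * Real.exp (-b * (-x) ^ 2)) := by
    funext x
    have : (-x) ^ (2*m+1) = -(x ^ (2*m+1)) := Odd.neg_pow ⟨m, by ring⟩ x
    rw [this]; ring_nf
  rw [heq]
  simpa [Function.comp] using h.neg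

lemma ibp_gauss {b : ℝ} (hb : 0 < b) (m : ℕ) :
    ∫ x : ℝ, ((2*m+1 : ℝ) * x ^ (2*m) - 2*b*x^(2*m+2)) * Real.exp (-b * x ^ 2) = 0 := by
  set φ : ℝ → ℝ := fun x => ((2*m+1 : ℝ) * x ^ (2*m) - 2*b*x^(2*m+2)) * Real.exp (-b * x ^ 2) with hφ
  set F : ℝ → ℝ := fun x => x ^ (2*m+1) * Real.exp (-b * x ^ 2) with hF
  have hderiv : ∀ x : ℝ, HasDerivAt F (φ x) x := by
    intro x
    have h1 : HasDerivAt (fun x : ℝ => x ^ (2*m+1)) ((2*m+1 : ℝ) * x ^ (2*m)) x := by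
      simpa using hasDerivAt_pow (2*m+1) x
    have h2 : HasDerivAt (fun x : ℝ => -b * x ^ 2) (-b * (2 * x)) x := by
      simpa using (hasDerivAt_pow 2 x).const_mul (-b)
    have h3 := h2.exp
    have h4 := h1.mul h3
    convert h4 using 1
    · rfl
    · rfl
    · rfl
    · simp only [hφ]
      ring
  have hint : Integrable φ := by
    have h1 := (integrable_pow_mul_gauss hb (2*m)).const_mul (2*m+1 : ℝ)
    have h2 := (integrable_pow_mul_gauss hb (2*m+2)).const_mul (2*b)
    have := h1.sub h2
    refine this.congr ?_
    filter_upwards with x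
    simp only [hφ, Pi.sub_apply]; ring
  have htop : Tendsto F atTop (nhds 0) := tendsto_pow_mul_gauss hb _
  have hbot : Tendsto F atBot (nhds 0) := tendsto_pow_mul_gauss_atBot hb m
  have hF0 : F 0 = 0 := by simp [hF]
  have hIic : ∫ x in Set.Iic (0:ℝ), φ x = F 0 - 0 :=
    integral_Iic_of_hasDerivAt_of_tendsto (Continuous.continuousWithinAt (by
      have : Continuous F := by
        exact (continuous_pow _).mul (Real.continuous_exp.comp (by continuity))
      exact this)) (fun x _ => hderiv x) hint.integrableOn hbot
  have hIoi : ∫ x in Set.Ioi (0:ℝ), φ x = 0 - F 0 :=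
    integral_Ioi_of_hasDerivAt_of_tendsto (Continuous.continuousWithinAt (by
      have : Continuous F := by
        exact (continuous_pow _).mul (Real.continuous_exp.comp (by continuity))
      exact this)) (fun x _ => hderiv x) hint.integrableOn htop
  have := intervalIntegral.integral_Iic_add_Ioi (hint.integrableOn) (hint.integrableOn) (f := φ) (b := (0:ℝ))
  rw [← this, hIic, hIoi, hF0]
  ring

lemma integral_pow_mul_gauss {b : ℝ} (hb : 0 < b) (m : ℕ) :
    ∫ x : ℝ, x ^ (2*m) * Real.exp (-b * x ^ 2)
      = Real.sqrt (Real.pi / b) * ((2*b)⁻¹) ^ m * (Nat.doubleFactorial (2*m-1) : ℝ) := by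
  induction m with
  | zero => simpa using integral_gaussian b
  | succ k ih =>
    have hibp := ibp_gauss hb k
    have h1 := (integrable_pow_mul_gauss hb (2*k)).const_mul (2*k+1 : ℝ)
    have h2 := (integrable_pow_mul_gauss hb (2*k+2)).const_mul (2*b)
    have hsub : ∫ x : ℝ, ((2*k+1 : ℝ) * x ^ (2*k) - 2*b*x^(2*k+2)) * Real.exp (-b * x ^ 2)
        = (2*k+1 : ℝ) * (∫ x : ℝ, x ^ (2*k) * Real.exp (-b * x ^ 2))
          - 2*b * ∫ x : ℝ, x ^ (2*k+2) * Real.exp (-b * x ^ 2) := by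
      rw [← integral_const_mul, ← integral_const_mul, ← integral_sub h1 h2]
      congr 1; funext x; ring
    rw [hsub] at hibp
    have h2k : (2*(k+1)) = 2*k+2 := by ring
    rw [h2k]
    have hval : ∫ x : ℝ, x ^ (2*k+2) * Real.exp (-b * x ^ 2)
        = (2*b)⁻¹ * ((2*k+1 : ℝ) * ∫ x : ℝ, x ^ (2*k) * Real.exp (-b * x ^ 2)) := by
      field_simp at hibp ⊢
      linarith [hibp]
    rw [hval, ih]
    have hdf : (Nat.doubleFactorial (2*k+2-1) : ℝ)
        = (2*k+1 : ℝ) * (Nat.doubleFactorial (2*k-1) : ℝ) := by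
      cases k with
      | zero => simp [Nat.doubleFactorial]
      | succ j =>
        have h1 : 2*(j+1)+2-1 = (2*j+1)+2 := by omega
        have h2 : 2*(j+1)-1 = 2*j+1 := by omega
        rw [h1, h2, Nat.doubleFactorial_add_two]
        push_cast
        ring
    rw [hdf]
    ring
lemma hasSum_sinc (x : ℝ) :
    HasSum (fun n : ℕ => (-1:ℝ)^n * Real.pi^(2*n) * x^(2*n) / (Nat.factorial (2*n+1) : ℝ))
      (_root_.sinc x) := by
  rcases eq_or_ne x 0 with rfl | hx
  · have h0 : _root_.sinc 0 = 1 := by simp [_root_.sinc]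
    have := hasSum_single (f := fun n : ℕ =>
        (-1:ℝ)^n * Real.pi^(2*n) * (0:ℝ)^(2*n) / (Nat.factorial (2*n+1) : ℝ)) 0
      (fun n hn => by
        have : (0:ℝ)^(2*n) = 0 := zero_pow (by omega)
        simp [this])
    simpa [h0] using this
  · have hπx : Real.pi * x ≠ 0 := mul_ne_zero Real.pi_ne_zero hx
    have h := (Real.hasSum_sin (Real.pi * x)).div_const (Real.pi * x)
    have hs : _root_.sinc x = Real.sin (Real.pi * x) / (Real.pi * x) := by simp [_root_.sinc, hx]
    rw [hs]
    convert h using 2 with n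
    · rfl
    rw [pow_succ, mul_pow]
    field_simp

lemma summable_norm_sinc_coeff (x : ℝ) :
    Summable fun n : ℕ =>
      ‖(-1:ℝ)^n * Real.pi^(2*n) * x^(2*n) / (Nat.factorial (2*n+1) : ℝ)‖ := by
  refine Summable.of_nonneg_of_le (fun n => norm_nonneg _) (fun n => ?_)
    ((Real.summable_pow_div_factorial (Real.pi^2*x^2)))
  have habs : |(-1:ℝ) * Real.pi^2 * x^2| = Real.pi^2 * x^2 := by
    rw [abs_mul, abs_mul, abs_neg, abs_one, one_mul, abs_of_nonneg (sq_nonneg Real.pi),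
      abs_of_nonneg (sq_nonneg x)]
  have h1 : ‖(-1:ℝ)^n * Real.pi^(2*n) * x^(2*n) / (Nat.factorial (2*n+1) : ℝ)‖
      = (Real.pi^2*x^2)^n / (Nat.factorial (2*n+1) : ℝ) := by
    rw [pow_mul, pow_mul, ← mul_pow, ← mul_pow, Real.norm_eq_abs, abs_div, Nat.abs_cast,
      abs_pow, habs]
  rw [h1]
  exact div_le_div_of_nonneg_left (by positivity)
    (by exact_mod_cast Nat.factorial_pos n)
    (by exact_mod_cast Nat.factorial_le (by omega))

lemma summable_norm_cos_coeff (y : ℝ) :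
    Summable fun k : ℕ => ‖(-1:ℝ)^k * y^(2*k) / (Nat.factorial (2*k) : ℝ)‖ := by
  refine Summable.of_nonneg_of_le (fun n => norm_nonneg _) (fun k => ?_)
    ((Real.summable_pow_div_factorial (y^2)))
  have habs : |(-1:ℝ) * y^2| = y^2 := by
    rw [abs_mul, abs_neg, abs_one, one_mul, abs_of_nonneg (sq_nonneg y)]
  have h1 : ‖(-1:ℝ)^k * y^(2*k) / (Nat.factorial (2*k) : ℝ)‖
      = (y^2)^k / (Nat.factorial (2*k) : ℝ) := by
    rw [pow_mul, ← mul_pow, Real.norm_eq_abs, abs_div, Nat.abs_cast, abs_pow, habs]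
  rw [h1]
  exact div_le_div_of_nonneg_left (by positivity)
    (by exact_mod_cast Nat.factorial_pos k)
    (by exact_mod_cast Nat.factorial_le (by omega))

lemma sinc_mul_cos (α x : ℝ) :
    _root_.sinc x * Real.cos (Real.pi * α * x) = ∑' m : ℕ, kappa α m * x^(2*m) := by
  have hf := summable_norm_sinc_coeff x
  have hg := summable_norm_cos_coeff (Real.pi * α * x)
  rw [← (hasSum_sinc x).tsum_eq, Real.cos_eq_tsum (Real.pi * α * x),
    tsum_mul_tsum_eq_tsum_sum_range_of_summable_norm hf hg]
  refine tsum_congr fun m => ?_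
  rw [kappa, Finset.sum_mul]
  refine Finset.sum_congr rfl fun n hn => ?_
  have hnm : n ≤ m := by simpa using Nat.lt_succ_iff.mp (Finset.mem_range.mp hn)
  obtain ⟨j, rfl⟩ : ∃ j, m = n + j := ⟨m - n, by omega⟩
  have e1 : n + j - n = j := by omega
  have e2 : 2 * (n + j) - 2 * n = 2 * j := by omega
  rw [e1, e2]
  have hfac1 : ((Nat.factorial (2*n+1) : ℝ)) ≠ 0 := by
    exact_mod_cast (Nat.factorial_pos _).ne'
  have hfac2 : ((Nat.factorial (2*j) : ℝ)) ≠ 0 := by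
    exact_mod_cast (Nat.factorial_pos _).ne'
  field_simp
  ring
lemma choose_le_two_pow' {n k : ℕ} (h : k ≤ n) : n.choose k ≤ 2 ^ n := by
  calc n.choose k ≤ ∑ i ∈ Finset.range (n+1), n.choose i :=
        Finset.single_le_sum (fun i _ => Nat.zero_le _) (Finset.mem_range.mpr (by omega))
    _ = 2 ^ n := Nat.sum_range_choose n

lemma fact_bound (m n : ℕ) (h : n ≤ m) :
    Nat.factorial (2*m) ≤ 2^(2*m+1) * (Nat.factorial (2*n+1) * Nat.factorial (2*m-2*n)) := by
  have h1 : 2*n+1 ≤ 2*m+1 := by omega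
  have h2 : 2*m+1-(2*n+1) = 2*m-2*n := by omega
  have hc := Nat.choose_mul_factorial_mul_factorial h1
  rw [h2] at hc
  have hcle : (2*m+1).choose (2*n+1) ≤ 2^(2*m+1) := choose_le_two_pow' h1
  calc Nat.factorial (2*m) ≤ Nat.factorial (2*m+1) := Nat.factorial_le (by omega)
    _ = (2*m+1).choose (2*n+1) * Nat.factorial (2*n+1) * Nat.factorial (2*m-2*n) := hc.symm
    _ ≤ 2^(2*m+1) * Nat.factorial (2*n+1) * Nat.factorial (2*m-2*n) := by
        exact Nat.mul_le_mul_right _ (Nat.mul_le_mul_right _ hcle)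
    _ = 2^(2*m+1) * (Nat.factorial (2*n+1) * Nat.factorial (2*m-2*n)) := by ring

lemma kappa_abs_le (α : ℝ) (m : ℕ) :
    |kappa α m| ≤ (m+1 : ℝ) *
      ((Real.pi * max 1 |α|)^(2*m) * 2^(2*m+1) / (Nat.factorial (2*m) : ℝ)) := by
  set A := max 1 |α| with hA
  have hA1 : (1:ℝ) ≤ A := le_max_left _ _
  have hA0 : (0:ℝ) < A := lt_of_lt_of_le one_pos hA1
  have hαA : |α| ≤ A := le_max_right _ _
  have hterm : ∀ n ∈ Finset.range (m+1),
      |(-1 : ℝ) ^ m * Real.pi ^ (2 * m) * α ^ (2 * (m - n)) /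
        ((Nat.factorial (2 * n + 1) : ℝ) * (Nat.factorial (2 * m - 2 * n) : ℝ))|
      ≤ (Real.pi * A)^(2*m) * 2^(2*m+1) / (Nat.factorial (2*m) : ℝ) := by
    intro n hn
    have hnm : n ≤ m := by
      have := Finset.mem_range.mp hn; omega
    have hD : (0:ℝ) < (Nat.factorial (2*n+1) : ℝ) * (Nat.factorial (2*m-2*n) : ℝ) :=
      mul_pos (by exact_mod_cast Nat.factorial_pos _) (by exact_mod_cast Nat.factorial_pos _)
    have h2m : (0:ℝ) < (Nat.factorial (2*m) : ℝ) := by exact_mod_cast Nat.factorial_pos _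
    have habs : |(-1 : ℝ) ^ m * Real.pi ^ (2 * m) * α ^ (2 * (m - n)) /
        ((Nat.factorial (2 * n + 1) : ℝ) * (Nat.factorial (2 * m - 2 * n) : ℝ))|
        = Real.pi ^ (2*m) * |α| ^ (2*(m-n)) /
          ((Nat.factorial (2 * n + 1) : ℝ) * (Nat.factorial (2 * m - 2 * n) : ℝ)) := by
      rw [abs_div, abs_mul, abs_mul, abs_pow, abs_pow, abs_pow, abs_neg, abs_one, one_pow,
        one_mul, abs_of_pos Real.pi_pos, abs_of_pos hD]
    rw [habs, div_le_div_iff₀ hD h2m]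
    have hαAm : |α| ^ (2*(m-n)) ≤ A^(2*m) := by
      calc |α| ^ (2*(m-n)) ≤ A ^ (2*(m-n)) := pow_le_pow_left₀ (abs_nonneg α) hαA _
        _ ≤ A^(2*m) := pow_le_pow_right₀ hA1 (by omega)
    have hfb : ((Nat.factorial (2*m) : ℝ))
        ≤ 2^(2*m+1) * ((Nat.factorial (2*n+1) : ℝ) * (Nat.factorial (2*m-2*n) : ℝ)) := by
      exact_mod_cast fact_bound m n hnm
    calc Real.pi ^ (2*m) * |α| ^ (2*(m-n)) * (Nat.factorial (2*m) : ℝ)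
        ≤ Real.pi ^ (2*m) * A ^ (2*m) * (Nat.factorial (2*m) : ℝ) := by
          gcongr
      _ = (Real.pi * A)^(2*m) * (Nat.factorial (2*m) : ℝ) := by rw [mul_pow]
      _ ≤ (Real.pi * A)^(2*m) *
          (2^(2*m+1) * ((Nat.factorial (2*n+1) : ℝ) * (Nat.factorial (2*m-2*n) : ℝ))) := by
          gcongr
      _ = (Real.pi * A)^(2*m) * 2^(2*m+1) *
          ((Nat.factorial (2*n+1) : ℝ) * (Nat.factorial (2*m-2*n) : ℝ)) := by ring
  calc |kappa α m| ≤ ∑ n ∈ Finset.range (m+1),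
        |(-1 : ℝ) ^ m * Real.pi ^ (2 * m) * α ^ (2 * (m - n)) /
          ((Nat.factorial (2 * n + 1) : ℝ) * (Nat.factorial (2 * m - 2 * n) : ℝ))| :=
        Finset.abs_sum_le_sum_abs _ _
    _ ≤ ∑ _n ∈ Finset.range (m+1),
        (Real.pi * A)^(2*m) * 2^(2*m+1) / (Nat.factorial (2*m) : ℝ) :=
        Finset.sum_le_sum hterm
    _ = (m+1 : ℝ) * ((Real.pi * A)^(2*m) * 2^(2*m+1) / (Nat.factorial (2*m) : ℝ)) := by
        rw [Finset.sum_const, Finset.card_range, nsmul_eq_mul]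
        push_cast; ring

lemma dfact_odd_eq (m : ℕ) :
    ((Nat.doubleFactorial (2*m+1)) : ℝ)
      = (Nat.factorial (2*m+2) : ℝ) / (2^(m+1) * (Nat.factorial (m+1) : ℝ)) := by
  have hnat : Nat.factorial (2*m+2)
      = 2^(m+1) * Nat.factorial (m+1) * Nat.doubleFactorial (2*m+1) := by
    have h1 := Nat.factorial_eq_mul_doubleFactorial (2*m+1)
    have h2 := Nat.doubleFactorial_two_mul (m+1)
    have e1 : 2*m+1+1 = 2*(m+1) := by omega
    rw [e1] at h1
    have e2 : 2*m+2 = 2*(m+1) := by omega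
    rw [e2, h1, h2]
  rw [eq_div_iff (by positivity)]
  rw [hnat]
  push_cast
  ring

lemma summable_master (α σ : ℝ) :
    Summable (fun m : ℕ =>
      |kappa α m| * σ^(2*m) * ((Nat.doubleFactorial (2*m+1)) : ℝ)) := by
  set A := max 1 |α| with hA
  have hA1 : (1:ℝ) ≤ A := le_max_left _ _
  have hA0 : (0:ℝ) < A := lt_of_lt_of_le one_pos hA1
  refine Summable.of_nonneg_of_le
    (fun m => mul_nonneg (mul_nonneg (abs_nonneg _) (by rw [pow_mul]; positivity))
      (Nat.cast_nonneg _)) (fun m => ?_)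
    (((Real.summable_pow_div_factorial (16*(Real.pi*A*σ)^2)).mul_left 4))
  have hκ := kappa_abs_le α m
  have hdf := dfact_odd_eq m
  have hf2 : (Nat.factorial (2*m+2) : ℝ)
      = (2*m+2 : ℝ) * (2*m+1 : ℝ) * (Nat.factorial (2*m) : ℝ) := by
    have h1 : Nat.factorial (2*m+2) = (2*m+2) * ((2*m+1) * Nat.factorial (2*m)) := by
      rw [Nat.factorial_succ, Nat.factorial_succ]
    rw [h1]; push_cast; ring
  have h2m : (0:ℝ) < (Nat.factorial (2*m) : ℝ) := by exact_mod_cast Nat.factorial_pos _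
  have hm1 : (0:ℝ) < (Nat.factorial (m+1) : ℝ) := by exact_mod_cast Nat.factorial_pos _
  have hmm : (0:ℝ) < (Nat.factorial m : ℝ) := by exact_mod_cast Nat.factorial_pos _
  have hdfpos : (0:ℝ) ≤ ((Nat.doubleFactorial (2*m+1)) : ℝ) := by positivity
  have hσ2 : (0:ℝ) ≤ σ^(2*m) := by rw [pow_mul]; positivity
  have step1 : |kappa α m| * σ^(2*m) * ((Nat.doubleFactorial (2*m+1)) : ℝ)
      ≤ ((m+1 : ℝ) * ((Real.pi * A)^(2*m) * 2^(2*m+1) / (Nat.factorial (2*m) : ℝ)))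
        * σ^(2*m) * ((Nat.doubleFactorial (2*m+1)) : ℝ) := by
    gcongr
  have hσabs : σ^(2*m) = |σ|^(2*m) := by
    rw [← abs_pow, abs_of_nonneg hσ2]
  have step2 : ((m+1 : ℝ) * ((Real.pi * A)^(2*m) * 2^(2*m+1) / (Nat.factorial (2*m) : ℝ)))
        * σ^(2*m) * ((Nat.doubleFactorial (2*m+1)) : ℝ)
      = (m+1 : ℝ) * (2*m+1 : ℝ) * (2*m+2 : ℝ)
        * ((Real.pi * A * σ)^2)^m * 2^m / (Nat.factorial (m+1) : ℝ) := by
    rw [hdf, hf2]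
    have h2e : (2:ℝ)^(2*m+1) = 2^m * 2^(m+1) := by
      rw [← pow_add]; ring_nf
    rw [h2e]
    field_simp
    try ring
  have step3 : (m+1 : ℝ) * (2*m+1 : ℝ) * (2*m+2 : ℝ)
        * ((Real.pi * A * σ)^2)^m * 2^m / (Nat.factorial (m+1) : ℝ)
      ≤ 4 * ((16*(Real.pi*A*σ)^2)^m / (Nat.factorial m : ℝ)) := by
    have e16 : ((16:ℝ)*(Real.pi*A*σ)^2)^m = 2^(4*m) * ((Real.pi*A*σ)^2)^m := by
      rw [mul_pow, show (16:ℝ) = 2^4 by norm_num, ← pow_mul]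
    rw [e16]
    have hb1 : (m+1 : ℝ) ≤ 2^m := by
      exact_mod_cast Nat.succ_le_of_lt (Nat.lt_two_pow_self (n := m))
    have hb2 : (2*m+1 : ℝ) ≤ 2*2^m := by nlinarith [hb1]
    have hb3 : (2*m+2 : ℝ) ≤ 2*2^m := by nlinarith [hb1]
    have hbfac : (Nat.factorial m : ℝ) ≤ (Nat.factorial (m+1) : ℝ) := by
      exact_mod_cast Nat.factorial_le (Nat.le_succ m)
    calc (m+1 : ℝ) * (2*m+1 : ℝ) * (2*m+2 : ℝ)
          * ((Real.pi * A * σ)^2)^m * 2^m / (Nat.factorial (m+1) : ℝ)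
        ≤ (2:ℝ)^m * (2*2^m) * (2*2^m) * ((Real.pi * A * σ)^2)^m * 2^m
            / (Nat.factorial m : ℝ) := by
          gcongr
      _ = 4 * ((2:ℝ)^(4*m) * ((Real.pi*A*σ)^2)^m / (Nat.factorial m : ℝ)) := by
          rw [show (2:ℝ)^(4*m) = 2^m*2^m*2^m*2^m by rw [← pow_add, ← pow_add, ← pow_add]; ring_nf]
          field_simp
          ring
  calc |kappa α m| * σ^(2*m) * ((Nat.doubleFactorial (2*m+1)) : ℝ)
      ≤ _ := step1
    _ = _ := step2
    _ ≤ _ := step3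

lemma dfact_succ_odd (m : ℕ) :
    Nat.doubleFactorial (2*m+1) = (2*m+1) * Nat.doubleFactorial (2*m-1) := by
  cases m with
  | zero => simp [Nat.doubleFactorial]
  | succ j =>
    have h1 : 2*(j+1)+1 = (2*j+1)+2 := by omega
    have h2 : 2*(j+1)-1 = 2*j+1 := by omega
    rw [h1, h2, Nat.doubleFactorial_add_two]

lemma dfact_mono_odd (m : ℕ) :
    Nat.doubleFactorial (2*m-1) ≤ Nat.doubleFactorial (2*m+1) := by
  rw [dfact_succ_odd]
  exact Nat.le_mul_of_pos_left _ (by omega)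
end


/-- The Gaussian expectation of `g(ε)·(1 + 4α²ε²)` with `g(ε) = sinc ε · cos (π α ε)`, for a
centered Gaussian synchronization error of standard deviation `σ > 0`, equals
`1 + Σ_{m≥1} κ_m σ^(2m) (2m−1)!! + 4α² Σ_{m≥0} κ_m σ^(2m+2) (2m+1)!!`,
and both series converge (Proposition 1, mean amplitude `ε̄₁`). -/
theorem mean_amplitude_sync_error (α σ : ℝ) (hσ : 0 < σ) :
    Summable (fun m : ℕ =>
        kappa α (m + 1) * σ ^ (2 * (m + 1)) * (Nat.doubleFactorial (2 * (m + 1) - 1) : ℝ)) ∧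
    Summable (fun m : ℕ =>
        kappa α m * σ ^ (2 * m + 2) * (Nat.doubleFactorial (2 * m + 1) : ℝ)) ∧
    (1 / Real.sqrt (2 * Real.pi * σ ^ 2)) *
        ∫ ε : ℝ, sinc ε * Real.cos (Real.pi * α * ε) * (1 + 4 * α ^ 2 * ε ^ 2) *
          Real.exp (-(ε ^ 2) / (2 * σ ^ 2))
      = 1 + (∑' m : ℕ,
            kappa α (m + 1) * σ ^ (2 * (m + 1)) * (Nat.doubleFactorial (2 * (m + 1) - 1) : ℝ))
        + 4 * α ^ 2 * ∑' m : ℕ,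
            kappa α m * σ ^ (2 * m + 2) * (Nat.doubleFactorial (2 * m + 1) : ℝ) := by
  have hb : (0:ℝ) < (2*σ^2)⁻¹ := by positivity
  set b : ℝ := (2*σ^2)⁻¹ with hbdef
  have hσpow : ∀ k : ℕ, (0:ℝ) < σ^k := fun k => pow_pos hσ k
  have hsq : Real.sqrt (2*Real.pi*σ^2) = Real.sqrt (Real.pi / b) := by
    rw [hbdef]
    congr 1
    field_simp
  have hinv : ((2*b)⁻¹ : ℝ) = σ^2 := by
    rw [hbdef]
    field_simp
  have hG : ∀ m : ℕ, ∫ x : ℝ, x^(2*m) * Real.exp (-b*x^2)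
      = Real.sqrt (2*Real.pi*σ^2) * σ^(2*m) * (Nat.doubleFactorial (2*m-1) : ℝ) := by
    intro m
    rw [integral_pow_mul_gauss hb m, hinv, ← hsq, ← pow_mul]
  have hS := summable_master α σ
  -- Summability of the base series A
  have hA_abs : ∀ m : ℕ, |kappa α m * σ^(2*m) * (Nat.doubleFactorial (2*m-1) : ℝ)|
      ≤ |kappa α m| * σ^(2*m) * (Nat.doubleFactorial (2*m+1) : ℝ) := by
    intro m
    rw [abs_mul, abs_mul, abs_of_pos (hσpow _), Nat.abs_cast]
    refine mul_le_mul_of_nonneg_left ?_ (mul_nonneg (abs_nonneg _) (hσpow _).le)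
    exact_mod_cast dfact_mono_odd m
  have hsumA : Summable (fun m : ℕ =>
      kappa α m * σ^(2*m) * (Nat.doubleFactorial (2*m-1) : ℝ)) :=
    Summable.of_abs (Summable.of_nonneg_of_le (fun _ => abs_nonneg _) hA_abs hS)
  have hsum1 : Summable (fun m : ℕ =>
      kappa α (m + 1) * σ ^ (2 * (m + 1)) * (Nat.doubleFactorial (2 * (m + 1) - 1) : ℝ)) := by
    exact (summable_nat_add_iff 1).mpr hsumA
  have hB_abs : ∀ m : ℕ, |kappa α m * σ^(2*m+2) * (Nat.doubleFactorial (2*m+1) : ℝ)|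
      ≤ σ^2 * (|kappa α m| * σ^(2*m) * (Nat.doubleFactorial (2*m+1) : ℝ)) := by
    intro m
    refine le_of_eq ?_
    rw [abs_mul, abs_mul, abs_of_pos (hσpow _), Nat.abs_cast, pow_add]
    ring
  have hsum2 : Summable (fun m : ℕ =>
      kappa α m * σ ^ (2 * m + 2) * (Nat.doubleFactorial (2 * m + 1) : ℝ)) :=
    Summable.of_abs (Summable.of_nonneg_of_le (fun _ => abs_nonneg _) hB_abs (hS.mul_left (σ^2)))
  refine ⟨hsum1, hsum2, ?_⟩
  -- the integrand as a series
  set F : ℕ → ℝ → ℝ := fun m x =>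
    kappa α m * x^(2*m) * ((1 + 4*α^2*x^2) * Real.exp (-b*x^2)) with hFdef
  have hFint : ∀ m : ℕ, Integrable (F m) := by
    intro m
    have h := ((integrable_pow_mul_gauss hb (2*m)).const_mul (kappa α m)).add
      ((integrable_pow_mul_gauss hb (2*m+2)).const_mul (kappa α m * (4*α^2)))
    refine h.congr ?_
    filter_upwards with x
    simp only [hFdef, Pi.add_apply]
    ring
  have hG' : ∀ m : ℕ, ∫ x : ℝ, x^(2*m+2) * Real.exp (-b*x^2)
      = Real.sqrt (2*Real.pi*σ^2) * σ^(2*m+2) * (Nat.doubleFactorial (2*m+1) : ℝ) := by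
    intro m
    have e1 : 2*(m+1) = 2*m+2 := by ring
    have e2 : 2*(m+1)-1 = 2*m+1 := by omega
    have := hG (m+1)
    rw [e1] at this
    rw [show 2*m+2-1 = 2*m+1 from by omega] at this
    exact this
  have hFI : ∀ m : ℕ, ∫ x : ℝ, F m x
      = kappa α m * (∫ x : ℝ, x^(2*m) * Real.exp (-b*x^2))
        + (kappa α m * (4*α^2)) * (∫ x : ℝ, x^(2*m+2) * Real.exp (-b*x^2)) := by
    intro m
    rw [← integral_const_mul, ← integral_const_mul,
      ← integral_add ((integrable_pow_mul_gauss hb (2*m)).const_mul _)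
        ((integrable_pow_mul_gauss hb (2*m+2)).const_mul _)]
    congr 1
    funext x
    simp only [hFdef]
    ring
  have hFIval : ∀ m : ℕ, ∫ x : ℝ, F m x
      = Real.sqrt (2*Real.pi*σ^2) *
          (kappa α m * σ^(2*m) * (Nat.doubleFactorial (2*m-1) : ℝ)
            + 4*α^2 * (kappa α m * σ^(2*m+2) * (Nat.doubleFactorial (2*m+1) : ℝ))) := by
    intro m
    rw [hFI m, hG m, hG' m]
    ring
  have hxpow_nonneg : ∀ (x : ℝ) (m : ℕ), (0:ℝ) ≤ x^(2*m) := by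
    intro x m
    rw [pow_mul]
    positivity
  have hFnorm : ∀ m : ℕ, ∫ x : ℝ, ‖F m x‖
      = |kappa α m| * (∫ x : ℝ, x^(2*m) * Real.exp (-b*x^2))
        + (|kappa α m| * (4*α^2)) * (∫ x : ℝ, x^(2*m+2) * Real.exp (-b*x^2)) := by
    intro m
    rw [← integral_const_mul, ← integral_const_mul,
      ← integral_add ((integrable_pow_mul_gauss hb (2*m)).const_mul _)
        ((integrable_pow_mul_gauss hb (2*m+2)).const_mul _)]
    congr 1
    funext x
    simp only [hFdef]
    rw [Real.norm_eq_abs, abs_mul, abs_mul, abs_of_nonneg (hxpow_nonneg x m),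
      abs_of_nonneg (by positivity : (0:ℝ) ≤ (1 + 4*α^2*x^2) * Real.exp (-b*x^2))]
    ring
  have hnormsum : Summable (fun m : ℕ => ∫ x : ℝ, ‖F m x‖) := by
    have hbound : ∀ m : ℕ, ∫ x : ℝ, ‖F m x‖
        ≤ Real.sqrt (2*Real.pi*σ^2) *
            (|kappa α m| * σ^(2*m) * (Nat.doubleFactorial (2*m+1) : ℝ))
          + (Real.sqrt (2*Real.pi*σ^2) * (4*α^2) * σ^2) *
            (|kappa α m| * σ^(2*m) * (Nat.doubleFactorial (2*m+1) : ℝ)) := by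
      intro m
      rw [hFnorm m, hG m, hG' m]
      have h1 : |kappa α m| * (Real.sqrt (2*Real.pi*σ^2) * σ^(2*m)
          * (Nat.doubleFactorial (2*m-1) : ℝ))
          ≤ Real.sqrt (2*Real.pi*σ^2) *
            (|kappa α m| * σ^(2*m) * (Nat.doubleFactorial (2*m+1) : ℝ)) := by
        have := dfact_mono_odd m
        have hd : ((Nat.doubleFactorial (2*m-1) : ℝ)) ≤ (Nat.doubleFactorial (2*m+1) : ℝ) := by
          exact_mod_cast this
        have hs : (0:ℝ) ≤ Real.sqrt (2*Real.pi*σ^2) := Real.sqrt_nonneg _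
        calc |kappa α m| * (Real.sqrt (2*Real.pi*σ^2) * σ^(2*m)
              * (Nat.doubleFactorial (2*m-1) : ℝ))
            ≤ |kappa α m| * (Real.sqrt (2*Real.pi*σ^2) * σ^(2*m)
              * (Nat.doubleFactorial (2*m+1) : ℝ)) := by
              gcongr
          _ = Real.sqrt (2*Real.pi*σ^2) *
              (|kappa α m| * σ^(2*m) * (Nat.doubleFactorial (2*m+1) : ℝ)) := by ring
      have h2 : |kappa α m| * (4*α^2) * (Real.sqrt (2*Real.pi*σ^2) * σ^(2*m+2)
          * (Nat.doubleFactorial (2*m+1) : ℝ))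
          = (Real.sqrt (2*Real.pi*σ^2) * (4*α^2) * σ^2) *
            (|kappa α m| * σ^(2*m) * (Nat.doubleFactorial (2*m+1) : ℝ)) := by
        rw [pow_add]
        ring
      linarith [h1, le_of_eq h2]
    refine Summable.of_nonneg_of_le
      (fun m => integral_nonneg (fun x => norm_nonneg _)) hbound ?_
    exact ((hS.mul_left _).add (hS.mul_left _))
  have hswap := integral_tsum_of_summable_integral_norm hFint hnormsum
  have hexp : ∀ x : ℝ, Real.exp (-(x^2)/(2*σ^2)) = Real.exp (-b*x^2) := by
    intro x
    rw [hbdef]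
    congr 1
    field_simp
  have hpoint : (fun x : ℝ => sinc x * Real.cos (Real.pi * α * x) * (1 + 4 * α ^ 2 * x ^ 2) *
      Real.exp (-(x ^ 2) / (2 * σ ^ 2))) = fun x : ℝ => ∑' m : ℕ, F m x := by
    funext x
    rw [hexp x]
    have h1 : ∑' m : ℕ, F m x
        = (∑' m : ℕ, kappa α m * x^(2*m)) * ((1 + 4*α^2*x^2) * Real.exp (-b*x^2)) :=
      tsum_mul_right
    rw [h1, ← sinc_mul_cos α x]
    ring
  rw [hpoint, ← hswap]
  have htsum : ∑' m : ℕ, ∫ x : ℝ, F m x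
      = Real.sqrt (2*Real.pi*σ^2) *
          ((∑' m : ℕ, kappa α m * σ^(2*m) * (Nat.doubleFactorial (2*m-1) : ℝ))
            + 4*α^2 * ∑' m : ℕ,
                kappa α m * σ^(2*m+2) * (Nat.doubleFactorial (2*m+1) : ℝ)) := by
    calc ∑' m : ℕ, ∫ x : ℝ, F m x
        = ∑' m : ℕ, Real.sqrt (2*Real.pi*σ^2) *
            (kappa α m * σ^(2*m) * (Nat.doubleFactorial (2*m-1) : ℝ)
              + 4*α^2 * (kappa α m * σ^(2*m+2) * (Nat.doubleFactorial (2*m+1) : ℝ))) :=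
          tsum_congr hFIval
      _ = Real.sqrt (2*Real.pi*σ^2) * ∑' m : ℕ,
            (kappa α m * σ^(2*m) * (Nat.doubleFactorial (2*m-1) : ℝ)
              + 4*α^2 * (kappa α m * σ^(2*m+2) * (Nat.doubleFactorial (2*m+1) : ℝ))) :=
          tsum_mul_left
      _ = Real.sqrt (2*Real.pi*σ^2) *
          ((∑' m : ℕ, kappa α m * σ^(2*m) * (Nat.doubleFactorial (2*m-1) : ℝ))
            + ∑' m : ℕ, 4*α^2 *
                (kappa α m * σ^(2*m+2) * (Nat.doubleFactorial (2*m+1) : ℝ))) := by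
          rw [Summable.tsum_add hsumA (hsum2.mul_left _)]
      _ = Real.sqrt (2*Real.pi*σ^2) *
          ((∑' m : ℕ, kappa α m * σ^(2*m) * (Nat.doubleFactorial (2*m-1) : ℝ))
            + 4*α^2 * ∑' m : ℕ,
                kappa α m * σ^(2*m+2) * (Nat.doubleFactorial (2*m+1) : ℝ)) := by
          rw [tsum_mul_left]
  rw [htsum]
  have hsqrt_ne : Real.sqrt (2*Real.pi*σ^2) ≠ 0 := by
    have : (0:ℝ) < 2*Real.pi*σ^2 := by positivity
    exact (Real.sqrt_pos.mpr this).ne'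
  rw [← mul_assoc, one_div_mul_cancel hsqrt_ne, one_mul]
  have hA0 : kappa α 0 * σ^(2*0) * (Nat.doubleFactorial (2*0-1) : ℝ) = 1 := by
    simp [kappa, Nat.factorial, Nat.doubleFactorial]
  rw [Summable.tsum_eq_zero_add hsumA, hA0]
end

section
/- Let α be a real roll-off factor and σ_ε > 0, and set g(ε) = sinc(ε)·cos(παε). Then the Gaussian expectation (1/√(2πσ_ε²)) ∫_{−∞}^{∞} g(ε)²·(1 + 4α²ε²)²·e^{−ε²/(2σ_ε²)} dε equals 1 + Σ_{p=1}^{∞} λ_p σ_ε^{2p} (2p−1)!! + 8α² Σ_{p=0}^{∞} λ_p σ_ε^{2p+2} (2p+1)!! + 16α⁴ Σ_{p=0}^{∞} λ_p σ_ε^{2p+4} (2p+3)!!, where all three series converge. -/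
open MeasureTheory

/-- The four-fold Cauchy-product coefficients
`λ_p = Σ_{n=0}^{p} Σ_{l=0}^{p−n} Σ_{k=0}^{p−n−l}
  (−1)^p π^(2p) α^(2(p−l−n)) / ((2n+1)! (2l+1)! (2k)! (2(p−n−l−k))!)`. -/
noncomputable def lambdaCoef (α : ℝ) (p : ℕ) : ℝ :=
  ∑ n ∈ Finset.range (p + 1), ∑ l ∈ Finset.range (p - n + 1),
    ∑ k ∈ Finset.range (p - n - l + 1),
      (-1 : ℝ) ^ p * Real.pi ^ (2 * p) * α ^ (2 * (p - l - n)) /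
        ((Nat.factorial (2 * n + 1) : ℝ) * (Nat.factorial (2 * l + 1) : ℝ) *
          (Nat.factorial (2 * k) : ℝ) * (Nat.factorial (2 * (p - n - l - k)) : ℝ))

noncomputable def aCoef (n : ℕ) : ℝ :=
  (-1) ^ n * Real.pi ^ (2 * n) / (Nat.factorial (2 * n + 1) : ℝ)

noncomputable def bCoef (α : ℝ) (k : ℕ) : ℝ :=
  (-1) ^ k * Real.pi ^ (2 * k) * α ^ (2 * k) / (Nat.factorial (2 * k) : ℝ)

noncomputable def a2 (s : ℕ) : ℝ := ∑ n ∈ Finset.range (s + 1), aCoef n * aCoef (s - n)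

noncomputable def b2 (α : ℝ) (t : ℕ) : ℝ := ∑ k ∈ Finset.range (t + 1), bCoef α k * bCoef α (t - k)

noncomputable def cCoef (α : ℝ) (p : ℕ) : ℝ := ∑ s ∈ Finset.range (p + 1), a2 s * b2 α (p - s)

/-- triangle reindex -/
lemma triangle_sum (f : ℕ → ℕ → ℝ) (p : ℕ) :
    ∑ s ∈ Finset.range (p + 1), ∑ n ∈ Finset.range (s + 1), f n (s - n)
      = ∑ n ∈ Finset.range (p + 1), ∑ l ∈ Finset.range (p - n + 1), f n l := by
  rw [Finset.sum_sigma', Finset.sum_sigma']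
  refine Finset.sum_nbij' (fun x => ⟨x.2, x.1 - x.2⟩) (fun x => ⟨x.1 + x.2, x.1⟩) ?_ ?_ ?_ ?_ ?_
  · rintro ⟨s, n⟩ h
    simp only [Finset.mem_sigma, Finset.mem_range] at h ⊢
    omega
  · rintro ⟨n, l⟩ h
    simp only [Finset.mem_sigma, Finset.mem_range] at h ⊢
    omega
  · rintro ⟨s, n⟩ h
    simp only [Finset.mem_sigma, Finset.mem_range] at h
    simp only [Sigma.mk.inj_iff]
    exact ⟨by omega, heq_of_eq (by omega)⟩
  · rintro ⟨n, l⟩ h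
    simp only [Finset.mem_sigma, Finset.mem_range] at h
    simp only [Sigma.mk.inj_iff]
    exact ⟨trivial, heq_of_eq (by omega)⟩
  · rintro ⟨s, n⟩ h
    rfl

lemma lambdaCoef_eq (α : ℝ) (p : ℕ) : lambdaCoef α p = cCoef α p := by
  have hc' : cCoef α p = ∑ s ∈ Finset.range (p + 1), ∑ n ∈ Finset.range (s + 1),
      (fun n l => aCoef n * aCoef l * b2 α (p - n - l)) n (s - n) := by
    rw [cCoef]
    refine Finset.sum_congr rfl fun s hs => ?_
    rw [a2, Finset.sum_mul]
    refine Finset.sum_congr rfl fun n hn => ?_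
    simp only [Finset.mem_range] at hs hn
    simp only
    congr 2
    omega
  rw [hc', triangle_sum (fun n l => aCoef n * aCoef l * b2 α (p - n - l)) p, lambdaCoef]
  refine Finset.sum_congr rfl fun n hn => ?_
  refine Finset.sum_congr rfl fun l hl => ?_
  rw [b2, Finset.mul_sum]
  refine Finset.sum_congr rfl fun k hk => ?_
  simp only [Finset.mem_range] at hn hl hk
  rw [aCoef, aCoef, bCoef, bCoef]
  set m := p - n - l - k with hmdef
  have h1 : n + l + k + m = p := by omega
  have hsign : (-1 : ℝ) ^ n * (-1 : ℝ) ^ l * (-1 : ℝ) ^ k * (-1 : ℝ) ^ m = (-1 : ℝ) ^ p := by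
    rw [← pow_add, ← pow_add, ← pow_add, h1]
  have hpi : Real.pi ^ (2 * n) * Real.pi ^ (2 * l) * Real.pi ^ (2 * k) * Real.pi ^ (2 * m)
      = Real.pi ^ (2 * p) := by
    rw [← pow_add, ← pow_add, ← pow_add]; congr 1; omega
  have hal : α ^ (2 * k) * α ^ (2 * m) = α ^ (2 * (p - l - n)) := by
    rw [← pow_add]; congr 1; omega
  have hml : p - n - l - k = m := rfl
  simp only [div_mul_div_comm]
  rw [← hsign, ← hpi, ← hal]
  ring

lemma hasSum_sinc_s3 (ε : ℝ) : HasSum (fun n => aCoef n * ε ^ (2 * n)) (sinc ε) := by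
  rcases eq_or_ne ε 0 with rfl | hε
  · have h : ∀ n : ℕ, n ∉ ({0} : Finset ℕ) → aCoef n * (0 : ℝ) ^ (2 * n) = 0 := by
      intro n hn
      simp only [Finset.mem_singleton] at hn
      rw [zero_pow (by omega), mul_zero]
    have := hasSum_sum_of_ne_finset_zero (L := SummationFilter.unconditional ℕ) (s := ({0} : Finset ℕ)) h
    simpa [sinc, aCoef] using this
  · have hπε : Real.pi * ε ≠ 0 := mul_ne_zero Real.pi_ne_zero hε
    have h := (Real.hasSum_sin (Real.pi * ε)).div_const (Real.pi * ε)
    have he : sinc ε = Real.sin (Real.pi * ε) / (Real.pi * ε) := by rw [sinc, if_neg hε]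
    rw [he]
    have hfun : (fun n => aCoef n * ε ^ (2 * n))
        = fun n : ℕ => (-1) ^ n * (Real.pi * ε) ^ (2 * n + 1) / ↑(2 * n + 1).factorial
            / (Real.pi * ε) := by
      funext n
      have hf : ((2 * n + 1).factorial : ℝ) ≠ 0 := Nat.cast_ne_zero.mpr (Nat.factorial_ne_zero _)
      rw [aCoef, mul_pow]
      field_simp
      ring
    rw [hfun]
    exact h

lemma hasSum_cosc (α ε : ℝ) :
    HasSum (fun k => bCoef α k * ε ^ (2 * k)) (Real.cos (Real.pi * α * ε)) := by
  have h := Real.hasSum_cos (Real.pi * α * ε)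
  have hfun : (fun k => bCoef α k * ε ^ (2 * k))
      = fun k : ℕ => (-1) ^ k * (Real.pi * α * ε) ^ (2 * k) / ↑(2 * k).factorial := by
    funext k
    rw [bCoef, mul_pow, mul_pow]
    ring
  rw [hfun]
  exact h

lemma summable_norm_a (ε : ℝ) : Summable fun n => ‖aCoef n * ε ^ (2 * n)‖ := by
  refine Summable.of_nonneg_of_le (fun n => norm_nonneg _) (fun n => ?_)
    (Real.summable_pow_div_factorial (Real.pi ^ 2 * ε ^ 2))
  have h1 : ‖aCoef n * ε ^ (2 * n)‖
      = (Real.pi ^ 2 * ε ^ 2) ^ n / ((2 * n + 1).factorial : ℝ) := by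
    rw [Real.norm_eq_abs, abs_mul, aCoef, abs_div, abs_mul, abs_pow, abs_neg, abs_one,
      one_pow, one_mul, abs_pow, Nat.abs_cast, mul_pow, pow_mul, pow_mul, sq_abs,
      abs_pow, abs_of_nonneg (sq_nonneg ε)]
    ring
  rw [h1]
  gcongr
  omega

lemma summable_norm_b (α ε : ℝ) : Summable fun k => ‖bCoef α k * ε ^ (2 * k)‖ := by
  refine Summable.of_nonneg_of_le (fun n => norm_nonneg _) (fun k => ?_)
    (Real.summable_pow_div_factorial (Real.pi ^ 2 * α ^ 2 * ε ^ 2))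
  have h1 : ‖bCoef α k * ε ^ (2 * k)‖
      = (Real.pi ^ 2 * α ^ 2 * ε ^ 2) ^ k / ((2 * k).factorial : ℝ) := by
    rw [Real.norm_eq_abs, abs_mul, bCoef, abs_div, abs_mul, abs_mul, abs_pow, abs_neg, abs_one,
      one_pow, one_mul, abs_pow, abs_pow, Nat.abs_cast, mul_pow, mul_pow, pow_mul, pow_mul,
      pow_mul, sq_abs, sq_abs, abs_pow, abs_of_nonneg (sq_nonneg ε)]
    ring
  rw [h1]
  gcongr
  omega

lemma range_sum_a (ε : ℝ) (s : ℕ) :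
    ∑ n ∈ Finset.range (s + 1), (aCoef n * ε ^ (2 * n)) * (aCoef (s - n) * ε ^ (2 * (s - n)))
      = a2 s * ε ^ (2 * s) := by
  rw [a2, Finset.sum_mul]
  refine Finset.sum_congr rfl fun n hn => ?_
  simp only [Finset.mem_range] at hn
  rw [mul_mul_mul_comm, ← pow_add, show 2 * n + 2 * (s - n) = 2 * s by omega]

lemma range_sum_b (α ε : ℝ) (t : ℕ) :
    ∑ k ∈ Finset.range (t + 1), (bCoef α k * ε ^ (2 * k)) * (bCoef α (t - k) * ε ^ (2 * (t - k)))
      = b2 α t * ε ^ (2 * t) := by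
  rw [b2, Finset.sum_mul]
  refine Finset.sum_congr rfl fun k hk => ?_
  simp only [Finset.mem_range] at hk
  rw [mul_mul_mul_comm, ← pow_add, show 2 * k + 2 * (t - k) = 2 * t by omega]

lemma summable_norm_a2 (ε : ℝ) : Summable fun s => ‖a2 s * ε ^ (2 * s)‖ := by
  have := summable_norm_sum_mul_range_of_summable_norm (summable_norm_a ε) (summable_norm_a ε)
  simpa only [range_sum_a] using this

lemma summable_norm_b2 (α ε : ℝ) : Summable fun t => ‖b2 α t * ε ^ (2 * t)‖ := by
  have := summable_norm_sum_mul_range_of_summable_norm (summable_norm_b α ε) (summable_norm_b α ε)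
  simpa only [range_sum_b] using this

lemma gsq_eq (α ε : ℝ) :
    (sinc ε * Real.cos (Real.pi * α * ε)) ^ 2 = ∑' p, cCoef α p * ε ^ (2 * p) := by
  have hA := summable_norm_a ε
  have hB := summable_norm_b α ε
  have e1 : sinc ε * sinc ε = ∑' s, a2 s * ε ^ (2 * s) := by
    rw [← (hasSum_sinc_s3 ε).tsum_eq,
      tsum_mul_tsum_eq_tsum_sum_range_of_summable_norm hA hA]
    exact tsum_congr fun s => range_sum_a ε s
  have e2 : Real.cos (Real.pi * α * ε) * Real.cos (Real.pi * α * ε)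
      = ∑' t, b2 α t * ε ^ (2 * t) := by
    rw [← (hasSum_cosc α ε).tsum_eq,
      tsum_mul_tsum_eq_tsum_sum_range_of_summable_norm hB hB]
    exact tsum_congr fun t => range_sum_b α ε t
  have e3 : (∑' s, a2 s * ε ^ (2 * s)) * (∑' t, b2 α t * ε ^ (2 * t))
      = ∑' p, cCoef α p * ε ^ (2 * p) := by
    rw [tsum_mul_tsum_eq_tsum_sum_range_of_summable_norm (summable_norm_a2 ε)
      (summable_norm_b2 α ε)]
    refine tsum_congr fun p => ?_
    rw [cCoef, Finset.sum_mul]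
    refine Finset.sum_congr rfl fun s hs => ?_
    simp only [Finset.mem_range] at hs
    rw [mul_mul_mul_comm, ← pow_add, show 2 * s + 2 * (p - s) = 2 * p by omega]
  calc (sinc ε * Real.cos (Real.pi * α * ε)) ^ 2
      = (sinc ε * sinc ε) * (Real.cos (Real.pi * α * ε) * Real.cos (Real.pi * α * ε)) := by ring
    _ = ∑' p, cCoef α p * ε ^ (2 * p) := by rw [e1, e2, e3]

lemma nat_fact_mul_le (i j : ℕ) :
    (i + j).factorial ≤ 2 ^ (i + j) * (i.factorial * j.factorial) := by
  have h := Nat.choose_mul_factorial_mul_factorial (Nat.le_add_right i j)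
  have hij : i + j - i = j := by omega
  rw [hij] at h
  have hc : (i + j).choose i ≤ 2 ^ (i + j) :=
    calc (i + j).choose i ≤ ∑ m ∈ Finset.range (i + j + 1), (i + j).choose m :=
          Finset.single_le_sum (fun m _ => Nat.zero_le _) (Finset.mem_range.mpr (by omega))
      _ = 2 ^ (i + j) := Nat.sum_range_choose (i + j)
  calc (i + j).factorial = (i + j).choose i * i.factorial * j.factorial := h.symm
    _ ≤ 2 ^ (i + j) * i.factorial * j.factorial :=
        Nat.mul_le_mul_right _ (Nat.mul_le_mul_right _ hc)
    _ = 2 ^ (i + j) * (i.factorial * j.factorial) := by ring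

lemma one_div_fact_mul (i j : ℕ) :
    (1 : ℝ) / ((i.factorial : ℝ) * (j.factorial : ℝ))
      ≤ 2 ^ (i + j) / (((i + j).factorial : ℝ)) := by
  rw [div_le_div_iff₀ (by positivity) (by positivity)]
  have := nat_fact_mul_le i j
  calc (1 : ℝ) * ((i + j).factorial : ℝ) = ((i + j).factorial : ℝ) := by ring
    _ ≤ ((2 ^ (i + j) * (i.factorial * j.factorial) : ℕ) : ℝ) := by exact_mod_cast this
    _ = 2 ^ (i + j) * ((i.factorial : ℝ) * (j.factorial : ℝ)) := by push_cast; ring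

lemma abs_aCoef_le (n : ℕ) : |aCoef n| ≤ Real.pi ^ (2 * n) / (((2 * n).factorial : ℝ)) := by
  have h : |aCoef n| = Real.pi ^ (2 * n) / (((2 * n + 1).factorial : ℝ)) := by
    rw [aCoef, abs_div, abs_mul, abs_pow, abs_neg, abs_one, one_pow, one_mul, abs_pow,
      Nat.abs_cast, abs_of_nonneg Real.pi_pos.le]
  rw [h]
  gcongr
  omega

lemma abs_bCoef_le (α : ℝ) (k : ℕ) :
    |bCoef α k| ≤ Real.pi ^ (2 * k) * (max 1 (α ^ 2)) ^ k / (((2 * k).factorial : ℝ)) := by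
  have h : |bCoef α k| = Real.pi ^ (2 * k) * (α ^ 2) ^ k / (((2 * k).factorial : ℝ)) := by
    rw [bCoef, abs_div, abs_mul, abs_mul, abs_pow, abs_neg, abs_one, one_pow, one_mul,
      abs_pow, abs_pow, Nat.abs_cast, abs_of_nonneg Real.pi_pos.le,
      show |α| ^ (2 * k) = (α ^ 2) ^ k by rw [pow_mul, sq_abs]]
  rw [h]
  gcongr
  exact le_max_right _ _

lemma abs_a2_le (s : ℕ) :
    |a2 s| ≤ ((s : ℝ) + 1) * (4 * Real.pi ^ 2) ^ s / (((2 * s).factorial : ℝ)) := by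
  have hterm : ∀ n ∈ Finset.range (s + 1),
      |aCoef n * aCoef (s - n)| ≤ (4 * Real.pi ^ 2) ^ s / (((2 * s).factorial : ℝ)) := by
    intro n hn
    simp only [Finset.mem_range] at hn
    have h1 := abs_aCoef_le n
    have h2 := abs_aCoef_le (s - n)
    calc |aCoef n * aCoef (s - n)| = |aCoef n| * |aCoef (s - n)| := abs_mul _ _
      _ ≤ (Real.pi ^ (2 * n) / (((2 * n).factorial : ℝ)))
            * (Real.pi ^ (2 * (s - n)) / (((2 * (s - n)).factorial : ℝ))) :=
          mul_le_mul h1 h2 (abs_nonneg _) (by positivity)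
      _ = Real.pi ^ (2 * s)
            * ((1 : ℝ) / (((2 * n).factorial : ℝ) * ((2 * (s - n)).factorial : ℝ))) := by
          rw [div_mul_div_comm, ← pow_add, show 2 * n + 2 * (s - n) = 2 * s by omega]
          ring
      _ ≤ Real.pi ^ (2 * s)
            * (2 ^ (2 * n + 2 * (s - n)) / (((2 * n + 2 * (s - n)).factorial : ℝ))) :=
          mul_le_mul_of_nonneg_left (one_div_fact_mul _ _) (by positivity)
      _ = (4 * Real.pi ^ 2) ^ s / (((2 * s).factorial : ℝ)) := by
          rw [show 2 * n + 2 * (s - n) = 2 * s by omega,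
            show (4 * Real.pi ^ 2) ^ s = 2 ^ (2 * s) * Real.pi ^ (2 * s) by
              rw [mul_pow, pow_mul, pow_mul]; norm_num]
          ring
  calc |a2 s| ≤ ∑ n ∈ Finset.range (s + 1), |aCoef n * aCoef (s - n)| :=
        Finset.abs_sum_le_sum_abs _ _
    _ ≤ ∑ _n ∈ Finset.range (s + 1), (4 * Real.pi ^ 2) ^ s / (((2 * s).factorial : ℝ)) :=
        Finset.sum_le_sum hterm
    _ = ((s : ℝ) + 1) * (4 * Real.pi ^ 2) ^ s / (((2 * s).factorial : ℝ)) := by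
        rw [Finset.sum_const, Finset.card_range, nsmul_eq_mul]
        push_cast; ring

lemma abs_b2_le (α : ℝ) (t : ℕ) :
    |b2 α t| ≤ ((t : ℝ) + 1) * (4 * Real.pi ^ 2 * (max 1 (α ^ 2))) ^ t
      / (((2 * t).factorial : ℝ)) := by
  set β := max 1 (α ^ 2) with hβ
  have hβ1 : (1 : ℝ) ≤ β := le_max_left _ _
  have hβ0 : (0 : ℝ) ≤ β := le_trans zero_le_one hβ1
  have hterm : ∀ k ∈ Finset.range (t + 1),
      |bCoef α k * bCoef α (t - k)| ≤ (4 * Real.pi ^ 2 * β) ^ t / (((2 * t).factorial : ℝ)) := by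
    intro k hk
    simp only [Finset.mem_range] at hk
    have h1 := abs_bCoef_le α k
    have h2 := abs_bCoef_le α (t - k)
    calc |bCoef α k * bCoef α (t - k)| = |bCoef α k| * |bCoef α (t - k)| := abs_mul _ _
      _ ≤ (Real.pi ^ (2 * k) * β ^ k / (((2 * k).factorial : ℝ)))
            * (Real.pi ^ (2 * (t - k)) * β ^ (t - k) / (((2 * (t - k)).factorial : ℝ))) :=
          mul_le_mul h1 h2 (abs_nonneg _) (by positivity)
      _ = Real.pi ^ (2 * t) * β ^ t
            * ((1 : ℝ) / (((2 * k).factorial : ℝ) * ((2 * (t - k)).factorial : ℝ))) := by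
          rw [div_mul_div_comm]
          rw [show Real.pi ^ (2 * k) * β ^ k * (Real.pi ^ (2 * (t - k)) * β ^ (t - k))
              = (Real.pi ^ (2 * k) * Real.pi ^ (2 * (t - k)))
                * (β ^ k * β ^ (t - k)) by ring, ← pow_add, ← pow_add,
            show 2 * k + 2 * (t - k) = 2 * t by omega, show k + (t - k) = t by omega]
          ring
      _ ≤ Real.pi ^ (2 * t) * β ^ t
            * (2 ^ (2 * k + 2 * (t - k)) / (((2 * k + 2 * (t - k)).factorial : ℝ))) :=
          mul_le_mul_of_nonneg_left (one_div_fact_mul _ _) (by positivity)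
      _ = (4 * Real.pi ^ 2 * β) ^ t / (((2 * t).factorial : ℝ)) := by
          rw [show 2 * k + 2 * (t - k) = 2 * t by omega,
            show (4 * Real.pi ^ 2 * β) ^ t = 2 ^ (2 * t) * Real.pi ^ (2 * t) * β ^ t by
              rw [mul_pow, mul_pow, pow_mul, pow_mul]; norm_num]
          ring
  calc |b2 α t| ≤ ∑ k ∈ Finset.range (t + 1), |bCoef α k * bCoef α (t - k)| :=
        Finset.abs_sum_le_sum_abs _ _
    _ ≤ ∑ _k ∈ Finset.range (t + 1), (4 * Real.pi ^ 2 * β) ^ t / (((2 * t).factorial : ℝ)) :=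
        Finset.sum_le_sum hterm
    _ = ((t : ℝ) + 1) * (4 * Real.pi ^ 2 * β) ^ t / (((2 * t).factorial : ℝ)) := by
        rw [Finset.sum_const, Finset.card_range, nsmul_eq_mul]
        push_cast; ring

lemma abs_cCoef_le (α : ℝ) (p : ℕ) :
    |cCoef α p| ≤ ((p : ℝ) + 1) ^ 3 * (16 * Real.pi ^ 2 * (max 1 (α ^ 2))) ^ p
      / (((2 * p).factorial : ℝ)) := by
  set β := max 1 (α ^ 2) with hβ
  have hβ1 : (1 : ℝ) ≤ β := le_max_left _ _
  have hβ0 : (0 : ℝ) ≤ β := le_trans zero_le_one hβ1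
  have hterm : ∀ s ∈ Finset.range (p + 1),
      |a2 s * b2 α (p - s)|
        ≤ ((p : ℝ) + 1) ^ 2 * (16 * Real.pi ^ 2 * β) ^ p / (((2 * p).factorial : ℝ)) := by
    intro s hs
    simp only [Finset.mem_range] at hs
    have h1 := abs_a2_le s
    have h2 := abs_b2_le α (p - s)
    calc |a2 s * b2 α (p - s)| = |a2 s| * |b2 α (p - s)| := abs_mul _ _
      _ ≤ (((s : ℝ) + 1) * (4 * Real.pi ^ 2) ^ s / (((2 * s).factorial : ℝ)))
            * ((((p - s : ℕ) : ℝ) + 1) * (4 * Real.pi ^ 2 * β) ^ (p - s)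
              / (((2 * (p - s)).factorial : ℝ))) :=
          mul_le_mul h1 h2 (abs_nonneg _) (by positivity)
      _ ≤ (((p : ℝ) + 1) * (4 * Real.pi ^ 2) ^ s / (((2 * s).factorial : ℝ)))
            * ((((p : ℝ)) + 1) * (4 * Real.pi ^ 2 * β) ^ (p - s)
              / (((2 * (p - s)).factorial : ℝ))) := by
          have hs1 : ((s : ℝ) + 1) ≤ ((p : ℝ) + 1) := by
            have : (s : ℝ) ≤ (p : ℝ) := by exact_mod_cast Nat.le_of_lt_succ hs
            linarith
          have hs2 : (((p - s : ℕ) : ℝ) + 1) ≤ ((p : ℝ) + 1) := by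
            have : ((p - s : ℕ) : ℝ) ≤ (p : ℝ) := by exact_mod_cast Nat.sub_le p s
            linarith
          gcongr
      _ = ((p : ℝ) + 1) ^ 2 * ((4 * Real.pi ^ 2) ^ s * (4 * Real.pi ^ 2 * β) ^ (p - s))
            * ((1 : ℝ) / (((2 * s).factorial : ℝ) * ((2 * (p - s)).factorial : ℝ))) := by
          ring
      _ ≤ ((p : ℝ) + 1) ^ 2 * ((4 * Real.pi ^ 2 * β) ^ p)
            * (2 ^ (2 * s + 2 * (p - s)) / (((2 * s + 2 * (p - s)).factorial : ℝ))) := by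
          have hx : (4 * Real.pi ^ 2) ^ s * (4 * Real.pi ^ 2 * β) ^ (p - s)
              ≤ (4 * Real.pi ^ 2 * β) ^ p := by
            have e1 : (4 * Real.pi ^ 2) ^ s ≤ (4 * Real.pi ^ 2 * β) ^ s := by
              refine pow_le_pow_left₀ (by positivity) ?_ s
              nlinarith [mul_nonneg (sub_nonneg.mpr hβ1) (sq_nonneg Real.pi)]
            calc (4 * Real.pi ^ 2) ^ s * (4 * Real.pi ^ 2 * β) ^ (p - s)
                ≤ (4 * Real.pi ^ 2 * β) ^ s * (4 * Real.pi ^ 2 * β) ^ (p - s) := by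
                  have : (0:ℝ) ≤ (4 * Real.pi ^ 2 * β) ^ (p - s) := by positivity
                  exact mul_le_mul_of_nonneg_right e1 this
              _ = (4 * Real.pi ^ 2 * β) ^ p := by
                  rw [← pow_add, show s + (p - s) = p by omega]
            done
          exact mul_le_mul (mul_le_mul_of_nonneg_left hx (by positivity))
            (one_div_fact_mul _ _) (by positivity) (by positivity)
      _ = ((p : ℝ) + 1) ^ 2 * (16 * Real.pi ^ 2 * β) ^ p / (((2 * p).factorial : ℝ)) := by
          rw [show 2 * s + 2 * (p - s) = 2 * p by omega,
            show (16 * Real.pi ^ 2 * β : ℝ) ^ p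
              = (4 * Real.pi ^ 2 * β) ^ p * 2 ^ (2 * p) by
                rw [pow_mul, ← mul_pow]; ring_nf]
          ring
  calc |cCoef α p| ≤ ∑ s ∈ Finset.range (p + 1), |a2 s * b2 α (p - s)| :=
        Finset.abs_sum_le_sum_abs _ _
    _ ≤ ∑ _s ∈ Finset.range (p + 1),
          ((p : ℝ) + 1) ^ 2 * (16 * Real.pi ^ 2 * β) ^ p / (((2 * p).factorial : ℝ)) :=
        Finset.sum_le_sum hterm
    _ = ((p : ℝ) + 1) ^ 3 * (16 * Real.pi ^ 2 * β) ^ p / (((2 * p).factorial : ℝ)) := by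
        rw [Finset.sum_const, Finset.card_range, nsmul_eq_mul]
        push_cast; ring

lemma dfac_odd_nat (m : ℕ) :
    Nat.doubleFactorial (2 * m - 1) * (2 ^ m * m.factorial) = (2 * m).factorial := by
  cases m with
  | zero => rfl
  | succ p =>
    rw [show 2 * (p + 1) - 1 = 2 * p + 1 by omega,
      show 2 * (p + 1) = 2 * p + 1 + 1 by omega,
      Nat.factorial_eq_mul_doubleFactorial (2 * p + 1),
      show 2 * p + 1 + 1 = 2 * (p + 1) by omega,
      Nat.doubleFactorial_two_mul]
    ring

lemma dfac_le_nat (p j : ℕ) (hj : j ≤ 2) :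
    Nat.doubleFactorial (2 * (p + j) - 1) * (2 ^ p * p.factorial)
      ≤ (2 * p + 4) ^ 4 * (2 * p).factorial := by
  have h1 := dfac_odd_nat (p + j)
  have h2 : 2 ^ p * p.factorial ≤ 2 ^ (p + j) * (p + j).factorial :=
    Nat.mul_le_mul (Nat.pow_le_pow_right (by norm_num) (by omega)) (Nat.factorial_le (by omega))
  have h3 : (2 * p + 4).factorial ≤ (2 * p + 4) ^ 4 * (2 * p).factorial := by
    have e : (2 * p + 4).factorial
        = (2 * p + 4) * ((2 * p + 3) * ((2 * p + 2) * ((2 * p + 1) * (2 * p).factorial))) := rfl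
    rw [e]
    calc (2 * p + 4) * ((2 * p + 3) * ((2 * p + 2) * ((2 * p + 1) * (2 * p).factorial)))
        ≤ (2 * p + 4) * ((2 * p + 4) * ((2 * p + 4) * ((2 * p + 4) * (2 * p).factorial))) := by
          gcongr <;> omega
      _ = (2 * p + 4) ^ 4 * (2 * p).factorial := by ring
  calc Nat.doubleFactorial (2 * (p + j) - 1) * (2 ^ p * p.factorial)
      ≤ Nat.doubleFactorial (2 * (p + j) - 1) * (2 ^ (p + j) * (p + j).factorial) :=
        Nat.mul_le_mul_left _ h2
    _ = (2 * (p + j)).factorial := h1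
    _ ≤ (2 * p + 4).factorial := Nat.factorial_le (by omega)
    _ ≤ (2 * p + 4) ^ 4 * (2 * p).factorial := h3

lemma dfac_le_real (p j : ℕ) (hj : j ≤ 2) :
    (Nat.doubleFactorial (2 * (p + j) - 1) : ℝ)
      ≤ (2 * (p : ℝ) + 4) ^ 4 * ((2 * p).factorial : ℝ) / (2 ^ p * (p.factorial : ℝ)) := by
  rw [le_div_iff₀ (by positivity)]
  have := dfac_le_nat p j hj
  calc (Nat.doubleFactorial (2 * (p + j) - 1) : ℝ) * (2 ^ p * (p.factorial : ℝ))
      = ((Nat.doubleFactorial (2 * (p + j) - 1) * (2 ^ p * p.factorial) : ℕ) : ℝ) := by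
        push_cast; ring
    _ ≤ (((2 * p + 4) ^ 4 * (2 * p).factorial : ℕ) : ℝ) := by exact_mod_cast this
    _ = (2 * (p : ℝ) + 4) ^ 4 * ((2 * p).factorial : ℝ) := by push_cast; ring

lemma poly_le (p : ℕ) : ((p : ℝ) + 1) ^ 3 * (2 * (p : ℝ) + 4) ^ 4 ≤ 256 * 128 ^ p := by
  have h1n : p + 1 ≤ 2 ^ p := Nat.lt_two_pow_self (n := p)
  have h1 : (p : ℝ) + 1 ≤ 2 ^ p := by exact_mod_cast h1n
  have h2n : p + 2 ≤ 2 ^ (p + 1) := Nat.lt_two_pow_self (n := p + 1)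
  have h2 : 2 * (p : ℝ) + 4 ≤ 4 * 2 ^ p := by
    have : (p : ℝ) + 2 ≤ 2 ^ (p + 1) := by exact_mod_cast h2n
    rw [pow_succ] at this
    linarith
  calc ((p : ℝ) + 1) ^ 3 * (2 * (p : ℝ) + 4) ^ 4
      ≤ (2 ^ p) ^ 3 * (4 * 2 ^ p) ^ 4 :=
        mul_le_mul (pow_le_pow_left₀ (by positivity) h1 3)
          (pow_le_pow_left₀ (by positivity) h2 4) (by positivity) (by positivity)
    _ = 256 * 128 ^ p := by
        rw [show (128 : ℝ) = 2 ^ 7 by norm_num, ← pow_mul (2:ℝ) 7 p, ← pow_mul (2:ℝ) p 3,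
          mul_pow, ← pow_mul (2:ℝ) p 4, show (4 : ℝ) ^ 4 = 256 by norm_num,
          show p * 3 = 3 * p by ring, show p * 4 = 4 * p by ring, show 7 * p = 3 * p + 4 * p by ring,
          pow_add]
        ring

lemma summable_abs_master (α σ : ℝ) (j : ℕ) (hj : j ≤ 2) :
    Summable fun p : ℕ =>
      |cCoef α p| * σ ^ (2 * (p + j)) * (Nat.doubleFactorial (2 * (p + j) - 1) : ℝ) := by
  set β := max 1 (α ^ 2) with hβ
  have hβ1 : (1 : ℝ) ≤ β := le_max_left _ _
  have hβ0 : (0 : ℝ) ≤ β := le_trans zero_le_one hβ1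
  set K := 16 * Real.pi ^ 2 * β with hK
  have hK0 : (0 : ℝ) ≤ K := by
    apply mul_nonneg (by positivity) hβ0
  refine Summable.of_nonneg_of_le (fun p => ?_) (fun p => ?_)
    ((Real.summable_pow_div_factorial (128 * K * σ ^ 2)).mul_left (256 * σ ^ (2 * j)))
  · have he : (0 : ℝ) ≤ σ ^ (2 * (p + j)) := (even_two_mul _).pow_nonneg σ
    exact mul_nonneg (mul_nonneg (abs_nonneg _) he) (Nat.cast_nonneg _)
  · have hb := abs_cCoef_le α p
    have hd := dfac_le_real p j hj
    have he : (0 : ℝ) ≤ σ ^ (2 * (p + j)) := (even_two_mul _).pow_nonneg σ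
    have hej : (0 : ℝ) ≤ σ ^ (2 * j) := (even_two_mul _).pow_nonneg σ
    have hσ2 : σ ^ (2 * (p + j)) = σ ^ (2 * j) * (σ ^ 2) ^ p := by
      rw [← pow_mul, ← pow_add]
      congr 1
      ring
    have hfact : (0 : ℝ) < ((2 * p).factorial : ℝ) := by positivity
    calc |cCoef α p| * σ ^ (2 * (p + j)) * (Nat.doubleFactorial (2 * (p + j) - 1) : ℝ)
        ≤ (((p : ℝ) + 1) ^ 3 * K ^ p / ((2 * p).factorial : ℝ)) * σ ^ (2 * (p + j))
            * ((2 * (p : ℝ) + 4) ^ 4 * ((2 * p).factorial : ℝ) / (2 ^ p * (p.factorial : ℝ))) := by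
          refine mul_le_mul (mul_le_mul hb le_rfl he ?_) hd (Nat.cast_nonneg _) ?_
          · positivity
          · have : (0 : ℝ) ≤ ((p : ℝ) + 1) ^ 3 * K ^ p / ((2 * p).factorial : ℝ) := by positivity
            exact mul_nonneg this he
      _ = σ ^ (2 * j) * (((p : ℝ) + 1) ^ 3 * (2 * (p : ℝ) + 4) ^ 4)
            * ((K * σ ^ 2) ^ p / (2 ^ p * (p.factorial : ℝ))) := by
          rw [hσ2, mul_pow]
          field_simp
          ring
      _ ≤ σ ^ (2 * j) * (256 * 128 ^ p) * ((K * σ ^ 2) ^ p / (2 ^ p * (p.factorial : ℝ))) := by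
          refine mul_le_mul_of_nonneg_right (mul_le_mul_of_nonneg_left (poly_le p) hej) ?_
          positivity
      _ ≤ 256 * σ ^ (2 * j) * ((128 * K * σ ^ 2) ^ p / (p.factorial : ℝ)) := by
          have hones : (1 : ℝ) ≤ 2 ^ p := one_le_pow₀ (by norm_num : (1:ℝ) ≤ 2)
          have hsplit : (128 * K * σ ^ 2) ^ p = 128 ^ p * (K * σ ^ 2) ^ p := by
            rw [← mul_pow]; ring_nf
          rw [hsplit]
          have hfr : (K * σ ^ 2) ^ p / (2 ^ p * (p.factorial : ℝ))
              ≤ (K * σ ^ 2) ^ p / (p.factorial : ℝ) := by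
            exact div_le_div_of_nonneg_left (by positivity)
              ((Nat.cast_pos (α := ℝ)).mpr (Nat.factorial_pos p))
              (by nlinarith [(Nat.cast_pos (α := ℝ)).mpr (Nat.factorial_pos p), hones])
          calc σ ^ (2 * j) * (256 * 128 ^ p) * ((K * σ ^ 2) ^ p / (2 ^ p * (p.factorial : ℝ)))
              ≤ σ ^ (2 * j) * (256 * 128 ^ p) * ((K * σ ^ 2) ^ p / (p.factorial : ℝ)) := by
                refine mul_le_mul_of_nonneg_left hfr ?_
                positivity
            _ = 256 * σ ^ (2 * j) * (128 ^ p * (K * σ ^ 2) ^ p / (p.factorial : ℝ)) := by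
                ring

lemma integrable_pow_gauss {σ : ℝ} (hσ : 0 < σ) (m : ℕ) :
    Integrable fun x : ℝ => x ^ m * Real.exp (-(x ^ 2) / (2 * σ ^ 2)) := by
  have hb : (0 : ℝ) < 1 / (2 * σ ^ 2) := by positivity
  have h := integrable_rpow_mul_exp_neg_mul_sq hb (s := (m : ℝ))
    (lt_of_lt_of_le neg_one_lt_zero (Nat.cast_nonneg m))
  refine h.congr (Filter.Eventually.of_forall fun x => ?_)
  simp only [Real.rpow_natCast]
  congr 1
  rw [Real.exp_eq_exp]
  ring

lemma gauss_zero {σ : ℝ} (hσ : 0 < σ) :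
    ∫ x : ℝ, Real.exp (-(x ^ 2) / (2 * σ ^ 2)) = Real.sqrt (2 * Real.pi * σ ^ 2) := by
  have h := integral_gaussian (1 / (2 * σ ^ 2))
  rw [show (fun x : ℝ => Real.exp (-(x ^ 2) / (2 * σ ^ 2)))
      = fun x : ℝ => Real.exp (-(1 / (2 * σ ^ 2)) * x ^ 2) from funext fun x => by
        congr 1; field_simp, h]
  congr 1
  field_simp

lemma gauss_moment {σ : ℝ} (hσ : 0 < σ) (m : ℕ) :
    ∫ x : ℝ, x ^ (2 * m) * Real.exp (-(x ^ 2) / (2 * σ ^ 2))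
      = Real.sqrt (2 * Real.pi * σ ^ 2) * σ ^ (2 * m)
        * (Nat.doubleFactorial (2 * m - 1) : ℝ) := by
  induction m with
  | zero =>
    norm_num [Nat.doubleFactorial]
    exact gauss_zero hσ
  | succ m ih =>
    have hσ2 : (0 : ℝ) < σ ^ 2 := by positivity
    have hu : ∀ x : ℝ, HasDerivAt (fun x : ℝ => x ^ (2 * m + 1))
        (((2 * m + 1 : ℕ) : ℝ) * x ^ (2 * m)) x := by
      intro x
      simpa using hasDerivAt_pow (2 * m + 1) x
    have hv : ∀ x : ℝ, HasDerivAt (fun x : ℝ => Real.exp (-(x ^ 2) / (2 * σ ^ 2)))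
        (Real.exp (-(x ^ 2) / (2 * σ ^ 2)) * (-(x / σ ^ 2))) x := by
      intro x
      have h1 : HasDerivAt (fun x : ℝ => -(x ^ 2) / (2 * σ ^ 2)) (-(x / σ ^ 2)) x := by
        have h2 := ((hasDerivAt_pow 2 x).neg).div_const (2 * σ ^ 2)
        refine h2.congr_deriv ?_
        field_simp
        ring
      exact h1.exp
    have hint1 : Integrable ((fun x : ℝ => x ^ (2 * m + 1))
        * fun x : ℝ => Real.exp (-(x ^ 2) / (2 * σ ^ 2)) * (-(x / σ ^ 2))) := by
      have := (integrable_pow_gauss hσ (2 * m + 2)).const_mul (-(1 / σ ^ 2))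
      refine this.congr (Filter.Eventually.of_forall fun x => ?_)
      simp only [Pi.mul_apply]
      field_simp
      ring
    have hint2 : Integrable ((fun x : ℝ => ((2 * m + 1 : ℕ) : ℝ) * x ^ (2 * m))
        * fun x : ℝ => Real.exp (-(x ^ 2) / (2 * σ ^ 2))) := by
      have := (integrable_pow_gauss hσ (2 * m)).const_mul ((2 * m + 1 : ℕ) : ℝ)
      refine this.congr (Filter.Eventually.of_forall fun x => ?_)
      simp only [Pi.mul_apply]
      ring
    have hint3 : Integrable ((fun x : ℝ => x ^ (2 * m + 1))
        * fun x : ℝ => Real.exp (-(x ^ 2) / (2 * σ ^ 2))) := by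
      have := integrable_pow_gauss hσ (2 * m + 1)
      refine this.congr (Filter.Eventually.of_forall fun x => ?_)
      simp only [Pi.mul_apply]
    have hparts := integral_mul_deriv_eq_deriv_mul_of_integrable (fun x _ => hu x) (fun x _ => hv x) hint1 hint2 hint3
    -- hparts : ∫ x, x^(2m+1) * (exp(..) * (-(x/σ²))) = - ∫ x, (2m+1) * x^(2m) * exp(..)
    have hL : ∫ x : ℝ, x ^ (2 * m + 1) * (Real.exp (-(x ^ 2) / (2 * σ ^ 2)) * (-(x / σ ^ 2)))
        = (-(1 / σ ^ 2)) * ∫ x : ℝ, x ^ (2 * m + 2) * Real.exp (-(x ^ 2) / (2 * σ ^ 2)) := by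
      rw [← integral_const_mul]
      congr 1
      funext x
      field_simp
      ring
    have hR : ∫ x : ℝ, ((2 * m + 1 : ℕ) : ℝ) * x ^ (2 * m) * Real.exp (-(x ^ 2) / (2 * σ ^ 2))
        = ((2 * m + 1 : ℕ) : ℝ) * ∫ x : ℝ, x ^ (2 * m) * Real.exp (-(x ^ 2) / (2 * σ ^ 2)) := by
      rw [← integral_const_mul]
      congr 1
      funext x
      ring
    rw [hL, hR] at hparts
    have hkey : ∫ x : ℝ, x ^ (2 * m + 2) * Real.exp (-(x ^ 2) / (2 * σ ^ 2))
        = σ ^ 2 * (((2 * m + 1 : ℕ) : ℝ)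
            * ∫ x : ℝ, x ^ (2 * m) * Real.exp (-(x ^ 2) / (2 * σ ^ 2))) := by
      have hne : (σ : ℝ) ^ 2 ≠ 0 := ne_of_gt hσ2
      rw [neg_mul, neg_inj, one_div, inv_mul_eq_iff_eq_mul₀ hne] at hparts
      exact hparts
    rw [show 2 * (m + 1) = 2 * m + 2 by omega, hkey, ih,
      show (2 * m + 2 : ℕ) - 1 = 2 * m + 1 by omega,
      Nat.doubleFactorial_add_one (2 * m)]
    push_cast
    ring

noncomputable def Gfun (α σ : ℝ) (p : ℕ) (x : ℝ) : ℝ :=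
  x ^ (2 * p) * ((1 + 4 * α ^ 2 * x ^ 2) ^ 2 * Real.exp (-(x ^ 2) / (2 * σ ^ 2)))

lemma Gfun_decomp (α σ : ℝ) (p : ℕ) : Gfun α σ p = fun x =>
    x ^ (2 * p) * Real.exp (-(x ^ 2) / (2 * σ ^ 2))
      + 8 * α ^ 2 * (x ^ (2 * p + 2) * Real.exp (-(x ^ 2) / (2 * σ ^ 2)))
      + 16 * α ^ 4 * (x ^ (2 * p + 4) * Real.exp (-(x ^ 2) / (2 * σ ^ 2))) := by
  funext x
  rw [Gfun]
  ring

lemma Gfun_nonneg (α σ : ℝ) (p : ℕ) (x : ℝ) : 0 ≤ Gfun α σ p x := by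
  rw [Gfun]
  exact mul_nonneg ((even_two_mul p).pow_nonneg x) (by positivity)

lemma integrable_G {σ : ℝ} (hσ : 0 < σ) (α : ℝ) (p : ℕ) : Integrable (Gfun α σ p) := by
  rw [Gfun_decomp]
  exact ((integrable_pow_gauss hσ (2 * p)).add
    ((integrable_pow_gauss hσ (2 * p + 2)).const_mul (8 * α ^ 2))).add
    ((integrable_pow_gauss hσ (2 * p + 4)).const_mul (16 * α ^ 4))

lemma integral_G {σ : ℝ} (hσ : 0 < σ) (α : ℝ) (p : ℕ) :
    ∫ x : ℝ, Gfun α σ p x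
      = Real.sqrt (2 * Real.pi * σ ^ 2) * σ ^ (2 * p)
          * (Nat.doubleFactorial (2 * p - 1) : ℝ)
        + 8 * α ^ 2 * (Real.sqrt (2 * Real.pi * σ ^ 2) * σ ^ (2 * (p + 1))
          * (Nat.doubleFactorial (2 * (p + 1) - 1) : ℝ))
        + 16 * α ^ 4 * (Real.sqrt (2 * Real.pi * σ ^ 2) * σ ^ (2 * (p + 2))
          * (Nat.doubleFactorial (2 * (p + 2) - 1) : ℝ)) := by
  have I1 : Integrable (fun x : ℝ => x ^ (2 * p) * Real.exp (-(x ^ 2) / (2 * σ ^ 2))) :=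
    integrable_pow_gauss hσ (2 * p)
  have I2 : Integrable (fun x : ℝ =>
      8 * α ^ 2 * (x ^ (2 * p + 2) * Real.exp (-(x ^ 2) / (2 * σ ^ 2)))) :=
    (integrable_pow_gauss hσ (2 * p + 2)).const_mul _
  have I3 : Integrable (fun x : ℝ =>
      16 * α ^ 4 * (x ^ (2 * p + 4) * Real.exp (-(x ^ 2) / (2 * σ ^ 2)))) :=
    (integrable_pow_gauss hσ (2 * p + 4)).const_mul _
  have I12 : Integrable (fun x : ℝ => x ^ (2 * p) * Real.exp (-(x ^ 2) / (2 * σ ^ 2))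
      + 8 * α ^ 2 * (x ^ (2 * p + 2) * Real.exp (-(x ^ 2) / (2 * σ ^ 2)))) := I1.add I2
  rw [Gfun_decomp]
  rw [integral_add I12 I3, integral_add I1 I2,
    integral_const_mul, integral_const_mul,
    show 2 * p + 2 = 2 * (p + 1) by omega, show 2 * p + 4 = 2 * (p + 2) by omega,
    gauss_moment hσ p, gauss_moment hσ (p + 1), gauss_moment hσ (p + 2)]

section Main

variable {α σ : ℝ}

lemma cCoef_zero (α : ℝ) : cCoef α 0 = 1 := by
  simp [cCoef, a2, b2, aCoef, bCoef]

lemma signed_summable (α σ : ℝ) (j : ℕ) (hj : j ≤ 2) :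
    Summable fun p : ℕ =>
      cCoef α p * σ ^ (2 * (p + j)) * (Nat.doubleFactorial (2 * (p + j) - 1) : ℝ) := by
  apply summable_abs_iff.mp
  refine (summable_abs_master α σ j hj).congr fun p => ?_
  have he : (0 : ℝ) ≤ σ ^ (2 * (p + j)) := (even_two_mul _).pow_nonneg σ
  rw [abs_mul, abs_mul, abs_of_nonneg he,
    abs_of_nonneg (Nat.cast_nonneg ((2 * (p + j) - 1).doubleFactorial) : (0:ℝ) ≤ _)]

lemma hs0 (α σ : ℝ) :
    Summable fun p : ℕ =>
      cCoef α p * σ ^ (2 * p) * (Nat.doubleFactorial (2 * p - 1) : ℝ) := by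
  refine (signed_summable α σ 0 (by norm_num)).congr fun p => ?_
  simp only [Nat.add_zero]

lemma hs1 (α σ : ℝ) :
    Summable fun p : ℕ =>
      cCoef α p * σ ^ (2 * (p + 1)) * (Nat.doubleFactorial (2 * (p + 1) - 1) : ℝ) :=
  signed_summable α σ 1 (by norm_num)

lemma hs2 (α σ : ℝ) :
    Summable fun p : ℕ =>
      cCoef α p * σ ^ (2 * (p + 2)) * (Nat.doubleFactorial (2 * (p + 2) - 1) : ℝ) :=
  signed_summable α σ 2 (by norm_num)

end Main

/-- The Gaussian expectation of `g(ε)²·(1 + 4α²ε²)²` with `g(ε) = sinc ε · cos (π α ε)`, for a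
centered Gaussian synchronization error of standard deviation `σ > 0`, equals
`1 + Σ_{p≥1} λ_p σ^(2p) (2p−1)!! + 8α² Σ_{p≥0} λ_p σ^(2p+2) (2p+1)!!
   + 16α⁴ Σ_{p≥0} λ_p σ^(2p+4) (2p+3)!!`,
and all three series converge (Proposition 1, mean squared amplitude `ε̄₂`). -/
theorem mean_squared_amplitude_sync_error (α σ : ℝ) (hσ : 0 < σ) :
    Summable (fun p : ℕ =>
        lambdaCoef α (p + 1) * σ ^ (2 * (p + 1)) *
          (Nat.doubleFactorial (2 * (p + 1) - 1) : ℝ)) ∧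
    Summable (fun p : ℕ =>
        lambdaCoef α p * σ ^ (2 * p + 2) * (Nat.doubleFactorial (2 * p + 1) : ℝ)) ∧
    Summable (fun p : ℕ =>
        lambdaCoef α p * σ ^ (2 * p + 4) * (Nat.doubleFactorial (2 * p + 3) : ℝ)) ∧
    (1 / Real.sqrt (2 * Real.pi * σ ^ 2)) *
        ∫ ε : ℝ, (sinc ε * Real.cos (Real.pi * α * ε)) ^ 2 * (1 + 4 * α ^ 2 * ε ^ 2) ^ 2 *
          Real.exp (-(ε ^ 2) / (2 * σ ^ 2))
      = 1 + (∑' p : ℕ,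
            lambdaCoef α (p + 1) * σ ^ (2 * (p + 1)) *
              (Nat.doubleFactorial (2 * (p + 1) - 1) : ℝ))
        + 8 * α ^ 2 * (∑' p : ℕ,
            lambdaCoef α p * σ ^ (2 * p + 2) * (Nat.doubleFactorial (2 * p + 1) : ℝ))
        + 16 * α ^ 4 * ∑' p : ℕ,
            lambdaCoef α p * σ ^ (2 * p + 4) * (Nat.doubleFactorial (2 * p + 3) : ℝ) := by
  simp only [lambdaCoef_eq]
  have hQpos : (0 : ℝ) < 2 * Real.pi * σ ^ 2 := by positivity
  set Q := Real.sqrt (2 * Real.pi * σ ^ 2) with hQdef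
  have hQ0 : 0 < Q := Real.sqrt_pos.mpr hQpos
  -- conjunct 2 and 3 in the statement's index form
  have hc2 : Summable fun p : ℕ =>
      cCoef α p * σ ^ (2 * p + 2) * (Nat.doubleFactorial (2 * p + 1) : ℝ) := by
    refine (hs1 α σ).congr fun p => ?_
    rw [show 2 * (p + 1) = 2 * p + 2 by omega, show 2 * p + 2 - 1 = 2 * p + 1 by omega]
  have hc3 : Summable fun p : ℕ =>
      cCoef α p * σ ^ (2 * p + 4) * (Nat.doubleFactorial (2 * p + 3) : ℝ) := by
    refine (hs2 α σ).congr fun p => ?_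
    rw [show 2 * (p + 2) = 2 * p + 4 by omega, show 2 * p + 4 - 1 = 2 * p + 3 by omega]
  have hc1 : Summable fun p : ℕ =>
      cCoef α (p + 1) * σ ^ (2 * (p + 1)) * (Nat.doubleFactorial (2 * (p + 1) - 1) : ℝ) :=
    (summable_nat_add_iff 1).mpr (hs0 α σ)
  refine ⟨hc1, hc2, hc3, ?_⟩
  -- the integrand as a tsum
  have hpt : ∀ x : ℝ,
      (sinc x * Real.cos (Real.pi * α * x)) ^ 2 * (1 + 4 * α ^ 2 * x ^ 2) ^ 2 *
          Real.exp (-(x ^ 2) / (2 * σ ^ 2))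
        = ∑' p : ℕ, cCoef α p * Gfun α σ p x := by
    intro x
    rw [gsq_eq α x, ← tsum_mul_right, ← tsum_mul_right]
    exact tsum_congr fun p => by rw [Gfun]; ring
  -- interchange sum and integral
  have hFint : ∀ p : ℕ, Integrable fun x : ℝ => cCoef α p * Gfun α σ p x :=
    fun p => (integrable_G hσ α p).const_mul _
  have hnormF : ∀ p : ℕ, (∫ x : ℝ, ‖cCoef α p * Gfun α σ p x‖)
      = |cCoef α p| * ∫ x : ℝ, Gfun α σ p x := by
    intro p
    rw [← integral_const_mul]
    congr 1
    funext x
    rw [Real.norm_eq_abs, abs_mul, abs_of_nonneg (Gfun_nonneg α σ p x)]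
  have hsumnorm : Summable fun p : ℕ => ∫ x : ℝ, ‖cCoef α p * Gfun α σ p x‖ := by
    have base : Summable fun p : ℕ =>
        Q * (|cCoef α p| * σ ^ (2 * (p + 0)) * (Nat.doubleFactorial (2 * (p + 0) - 1) : ℝ))
        + (8 * α ^ 2 * Q *
            (|cCoef α p| * σ ^ (2 * (p + 1)) * (Nat.doubleFactorial (2 * (p + 1) - 1) : ℝ))
          + 16 * α ^ 4 * Q *
            (|cCoef α p| * σ ^ (2 * (p + 2)) * (Nat.doubleFactorial (2 * (p + 2) - 1) : ℝ))) :=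
      ((summable_abs_master α σ 0 (by norm_num)).mul_left Q).add
        (((summable_abs_master α σ 1 (by norm_num)).mul_left (8 * α ^ 2 * Q)).add
          ((summable_abs_master α σ 2 (by norm_num)).mul_left (16 * α ^ 4 * Q)))
    refine base.congr fun p => ?_
    rw [hnormF p, integral_G hσ α p]
    simp only [Nat.add_zero]
    ring
  have hswap : (∑' p : ℕ, ∫ x : ℝ, cCoef α p * Gfun α σ p x)
      = ∫ x : ℝ, (sinc x * Real.cos (Real.pi * α * x)) ^ 2 * (1 + 4 * α ^ 2 * x ^ 2) ^ 2 *
          Real.exp (-(x ^ 2) / (2 * σ ^ 2)) := by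
    rw [integral_tsum_of_summable_integral_norm hFint hsumnorm]
    congr 1
    funext x
    exact (hpt x).symm
  rw [← hswap]
  -- compute each integral
  have hIF : ∀ p : ℕ, (∫ x : ℝ, cCoef α p * Gfun α σ p x)
      = Q * (cCoef α p * σ ^ (2 * p) * (Nat.doubleFactorial (2 * p - 1) : ℝ)
          + 8 * α ^ 2 *
            (cCoef α p * σ ^ (2 * (p + 1)) * (Nat.doubleFactorial (2 * (p + 1) - 1) : ℝ))
          + 16 * α ^ 4 *
            (cCoef α p * σ ^ (2 * (p + 2)) * (Nat.doubleFactorial (2 * (p + 2) - 1) : ℝ))) := by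
    intro p
    rw [integral_const_mul, integral_G hσ α p]
    ring
  have hQne : Q ≠ 0 := ne_of_gt hQ0
  calc (1 / Q) * ∑' p : ℕ, ∫ x : ℝ, cCoef α p * Gfun α σ p x
      = ∑' p : ℕ,
          (cCoef α p * σ ^ (2 * p) * (Nat.doubleFactorial (2 * p - 1) : ℝ)
          + (8 * α ^ 2 *
            (cCoef α p * σ ^ (2 * (p + 1)) * (Nat.doubleFactorial (2 * (p + 1) - 1) : ℝ))
          + 16 * α ^ 4 *
            (cCoef α p * σ ^ (2 * (p + 2)) * (Nat.doubleFactorial (2 * (p + 2) - 1) : ℝ)))) := by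
        rw [← tsum_mul_left]
        refine tsum_congr fun p => ?_
        rw [hIF p]
        field_simp
        ring
    _ = (∑' p : ℕ, cCoef α p * σ ^ (2 * p) * (Nat.doubleFactorial (2 * p - 1) : ℝ))
        + ((∑' p : ℕ, 8 * α ^ 2 *
            (cCoef α p * σ ^ (2 * (p + 1)) * (Nat.doubleFactorial (2 * (p + 1) - 1) : ℝ)))
        + (∑' p : ℕ, 16 * α ^ 4 *
            (cCoef α p * σ ^ (2 * (p + 2)) * (Nat.doubleFactorial (2 * (p + 2) - 1) : ℝ)))) := by
        rw [Summable.tsum_add (hs0 α σ) (((hs1 α σ).mul_left (8 * α ^ 2)).add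
            ((hs2 α σ).mul_left (16 * α ^ 4))),
          Summable.tsum_add ((hs1 α σ).mul_left (8 * α ^ 2)) ((hs2 α σ).mul_left (16 * α ^ 4))]
    _ = 1 + (∑' p : ℕ,
            cCoef α (p + 1) * σ ^ (2 * (p + 1)) *
              (Nat.doubleFactorial (2 * (p + 1) - 1) : ℝ))
        + 8 * α ^ 2 * (∑' p : ℕ,
            cCoef α p * σ ^ (2 * p + 2) * (Nat.doubleFactorial (2 * p + 1) : ℝ))
        + 16 * α ^ 4 * ∑' p : ℕ,
            cCoef α p * σ ^ (2 * p + 4) * (Nat.doubleFactorial (2 * p + 3) : ℝ) := by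
        rw [Summable.tsum_eq_zero_add (hs0 α σ), tsum_mul_left, tsum_mul_left]
        have h0 : cCoef α 0 * σ ^ (2 * 0) * (Nat.doubleFactorial (2 * 0 - 1) : ℝ) = 1 := by
          rw [cCoef_zero]
          norm_num [Nat.doubleFactorial]
        rw [h0]
        have e2 : (∑' p : ℕ,
            cCoef α p * σ ^ (2 * (p + 1)) * (Nat.doubleFactorial (2 * (p + 1) - 1) : ℝ))
            = ∑' p : ℕ,
            cCoef α p * σ ^ (2 * p + 2) * (Nat.doubleFactorial (2 * p + 1) : ℝ) := by
          refine tsum_congr fun p => ?_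
          rw [show 2 * (p + 1) = 2 * p + 2 by omega, show 2 * p + 2 - 1 = 2 * p + 1 by omega]
        have e3 : (∑' p : ℕ,
            cCoef α p * σ ^ (2 * (p + 2)) * (Nat.doubleFactorial (2 * (p + 2) - 1) : ℝ))
            = ∑' p : ℕ,
            cCoef α p * σ ^ (2 * p + 4) * (Nat.doubleFactorial (2 * p + 3) : ℝ) := by
          refine tsum_congr fun p => ?_
          rw [show 2 * (p + 2) = 2 * p + 4 by omega, show 2 * p + 4 - 1 = 2 * p + 3 by omega]
        rw [e2, e3]
        ring
end

section
/- Let K ∈ ℕ, let μ ∈ 2ℕ (an even number of interfering symbols), let a, σ ∈ ℝ, b_k, h_k ∈ ℝ, T > 0, and let z : ℝ → ℝ be measurable. Let the random variables x_{k,q} (for k = 1,…,K and q ∈ {−μ/2,…,μ/2}), n, and ε_1,…,ε_K be mutually independent with E[x_{k,q}] = 0 and E[x_{k,q}²] = 1 for all k, q, E[n] = 0 and E[n²] = σ², and the ε_k identically distributed with ε̌ = E[z(ε₁T)] and ε̃_q = E[z(T(q+ε₁))²] finite for all q. Define ŷ = a(Σ_{k=1}^{K} x_{k,0} z(ε_k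 T) b_k h_k + n) + a Σ_{q ≠ 0, |q| ≤ μ/2} Σ_{k=1}^{K} x_{k,q} z(T(q+ε_k)) b_k h_k and r = Σ_{k=1}^{K} x_{k,0}. Then E[(ŷ − r)²] = Σ_{k=1}^{K} ((a b_k h_k)² ε̃₀ + 1) − 2 Σ_{k=1}^{K} a b_k h_k ε̌ + Σ_{q ≠ 0, |q| ≤ μ/2} Σ_{k=1}^{K} (a b_k h_k)² ε̃_q + σ² a². -/
open MeasureTheory ProbabilityTheory


private lemma l2_mul_integrable {Ω : Type*} [MeasurableSpace Ω] {μ : Measure Ω}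
    {f g : Ω → ℝ} (hf : MemLp f 2 μ) (hg : MemLp g 2 μ) :
    Integrable (fun ω => f ω * g ω) μ := by
  have : MemLp (g • f) 1 μ := hf.smul hg
  have := memLp_one_iff_integrable.mp this
  exact (by simpa [Pi.smul_apply, smul_eq_mul, mul_comm] using this : Integrable (f * g) μ)

private lemma indep_single {Ω ι : Type*} [MeasurableSpace Ω] {μ : Measure Ω}
    [DecidableEq ι]
    {Y : ι → Ω → ℝ} (hind : iIndepFun Y μ)
    (hY : ∀ i, Measurable (Y i))
    (i : ι) {m : ℕ} (c : Fin m → ι) (hc : ∀ t, c t ≠ i)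
    (φ : (Fin m → ℝ) → ℝ) (hφ : Measurable φ) :
    IndepFun (Y i) (fun ω => φ fun t => Y (c t) ω) μ := by
  classical
  set T : Finset ι := Finset.univ.image c with hT
  have hdisj : Disjoint ({i} : Finset ι) T := by
    simp only [Finset.disjoint_left, Finset.mem_singleton]
    rintro a rfl ha
    simp only [hT, Finset.mem_image] at ha
    obtain ⟨t, _, ht⟩ := ha
    exact hc t ht
  have h := hind.indepFun_finset {i} T hdisj hY
  have hmem : ∀ t, c t ∈ T := fun t => Finset.mem_image_of_mem c (Finset.mem_univ t)
  exact h.comp (measurable_pi_apply (⟨i, Finset.mem_singleton_self i⟩ : ({i} : Finset ι)))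
    (hφ.comp (measurable_pi_lambda _ (fun t => measurable_pi_apply (⟨c t, hmem t⟩ : T))))

/-- MSE of over-the-air computing under synchronization errors and intersymbol interference
(equations (7) and (31) of the paper). The even number of interfering symbols is `μ = 2 * M`,
so the interfering symbol indices are `q ∈ {−M, …, M}`. With mutually independent data symbols
`x_{k,q}` (zero mean, unit second moment), noise `n` (zero mean, second moment `σ²`) and
identically distributed synchronization errors `ε_k`, the mean squared error of the received
signal `ŷ` against the target `r = Σ_k x_{k,0}` equals
`Σ_k ((a b_k h_k)² ε̃₀ + 1) − 2 Σ_k a b_k h_k ε̌ + Σ_{q≠0} Σ_k (a b_k h_k)² ε̃_q + σ² a²`,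
where `ε̌ = E[z(ε₁ T)]` and `ε̃_q = E[z(T(q + ε₁))²]`. -/
theorem ota_mse_sync_errors_isi
    {Ω : Type*} [MeasurableSpace Ω] (μ : Measure Ω) [IsProbabilityMeasure μ]
    (K : ℕ) (hK : 0 < K) (M : ℕ) (a σ T : ℝ) (hT : 0 < T) (b h : Fin K → ℝ)
    (z : ℝ → ℝ) (hz : Measurable z)
    (x : Fin K → ℤ → Ω → ℝ) (n : Ω → ℝ) (ε : Fin K → Ω → ℝ)
    (hxm : ∀ k q, Measurable (x k q)) (hnm : Measurable n) (hεm : ∀ k, Measurable (ε k))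
    -- the random variables `x_{k,q}` (for `|q| ≤ M`), `ε_1, …, ε_K` and `n` are mutually
    -- independent
    (hindep : iIndepFun
      (Sum.elim (fun p : Fin K × {q : ℤ // q ∈ Finset.Icc (-(M : ℤ)) (M : ℤ)} =>
          x p.1 p.2.1)
        (Sum.elim ε (fun _ : Unit => n)) :
        ((Fin K × {q : ℤ // q ∈ Finset.Icc (-(M : ℤ)) (M : ℤ)}) ⊕ (Fin K ⊕ Unit)) → Ω → ℝ) μ)
    (hx1 : ∀ k, ∀ q ∈ Finset.Icc (-(M : ℤ)) (M : ℤ), ∫ ω, x k q ω ∂μ = 0)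
    (hx2 : ∀ k, ∀ q ∈ Finset.Icc (-(M : ℤ)) (M : ℤ), ∫ ω, (x k q ω) ^ 2 ∂μ = 1)
    (hx2i : ∀ k, ∀ q ∈ Finset.Icc (-(M : ℤ)) (M : ℤ),
      Integrable (fun ω => (x k q ω) ^ 2) μ)
    (hn1 : ∫ ω, n ω ∂μ = 0)
    (hn2 : ∫ ω, (n ω) ^ 2 ∂μ = σ ^ 2)
    (hn2i : Integrable (fun ω => (n ω) ^ 2) μ)
    -- the `ε_k` are identically distributed
    (hid : ∀ k, IdentDistrib (ε k) (ε ⟨0, hK⟩) μ μ)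
    (echeck : ℝ) (etilde : ℤ → ℝ)
    (hech : ∫ ω, z (ε ⟨0, hK⟩ ω * T) ∂μ = echeck)
    (hechi : Integrable (fun ω => z (ε ⟨0, hK⟩ ω * T)) μ)
    (hetil : ∀ q ∈ Finset.Icc (-(M : ℤ)) (M : ℤ),
      ∫ ω, (z (T * ((q : ℝ) + ε ⟨0, hK⟩ ω))) ^ 2 ∂μ = etilde q)
    (hetili : ∀ q ∈ Finset.Icc (-(M : ℤ)) (M : ℤ),
      Integrable (fun ω => (z (T * ((q : ℝ) + ε ⟨0, hK⟩ ω))) ^ 2) μ) :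
    ∫ ω, (a * ((∑ k, x k 0 ω * z (ε k ω * T) * b k * h k) + n ω)
          + a * (∑ q ∈ (Finset.Icc (-(M : ℤ)) (M : ℤ)).erase 0,
              ∑ k, x k q ω * z (T * ((q : ℝ) + ε k ω)) * b k * h k)
          - ∑ k, x k 0 ω) ^ 2 ∂μ
      = (∑ k : Fin K, ((a * b k * h k) ^ 2 * etilde 0 + 1))
        - 2 * (∑ k : Fin K, a * b k * h k * echeck)
        + (∑ q ∈ (Finset.Icc (-(M : ℤ)) (M : ℤ)).erase 0,
            ∑ k : Fin K, (a * b k * h k) ^ 2 * etilde q)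
        + σ ^ 2 * a ^ 2 := by
  classical
  set Q : Finset ℤ := Finset.Icc (-(M : ℤ)) (M : ℤ) with hQdef
  have h0Q : (0 : ℤ) ∈ Q := by
    simp only [hQdef, Finset.mem_Icc]
    constructor <;> [exact neg_nonpos.mpr (Int.ofNat_nonneg M); exact Int.ofNat_nonneg M]
  set k0 : Fin K := ⟨0, hK⟩ with hk0
  -- index types
  let QT := {q : ℤ // q ∈ Q}
  let ι : Type _ := (Fin K × QT) ⊕ (Fin K ⊕ Unit)
  let Y : ι → Ω → ℝ := Sum.elim (fun p : Fin K × QT => x p.1 p.2.1) (Sum.elim ε fun _ => n)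
  have hindep' : iIndepFun Y μ := hindep
  have hYm : ∀ i, Measurable (Y i) := by
    rintro ((⟨k, q⟩) | (k | u))
    · exact hxm k q.1
    · exact hεm k
    · exact hnm
  -- deterministic factors
  let G : Fin K → ℤ → ℝ → ℝ := fun k q t =>
    if q = 0 then a * z (t * T) * b k * h k - 1 else a * z (T * ((q : ℝ) + t)) * b k * h k
  have hGm : ∀ k q, Measurable (G k q) := by
    intro k q
    by_cases hq : q = 0
    · simp only [G, hq, if_true]
      exact ((((hz.comp (measurable_mul_const T)).const_mul a).mul_const (b k)).mul_const
        (h k)).sub measurable_const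
    · simp only [G, hq, if_false]
      exact (((hz.comp ((measurable_const.add measurable_id).const_mul T)).const_mul a).mul_const
        (b k)).mul_const (h k)
  -- the terms of ŷ - r
  let J : Type _ := (Fin K × QT) ⊕ Unit
  let F : J → Ω → ℝ := Sum.elim
    (fun p ω => x p.1 p.2.1 ω * G p.1 p.2.1 (ε p.1 ω)) (fun _ ω => a * n ω)
  -- identically distributed transfers
  have hmzq : ∀ q : ℤ, Measurable fun t : ℝ => (z (T * ((q : ℝ) + t))) ^ 2 := fun q =>
    (hz.comp ((measurable_const.add measurable_id).const_mul T)).pow_const 2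
  have hzsq_id : ∀ (k) (q : ℤ), IdentDistrib (fun ω => (z (T * ((q : ℝ) + ε k ω))) ^ 2)
      (fun ω => (z (T * ((q : ℝ) + ε k0 ω))) ^ 2) μ μ := fun k q => (hid k).comp (hmzq q)
  have hzsq_int : ∀ k, ∀ q ∈ Q, Integrable (fun ω => (z (T * ((q : ℝ) + ε k ω))) ^ 2) μ :=
    fun k q hq => (hzsq_id k q).integrable_iff.mpr (hetili q hq)
  have hzsq_eq : ∀ k, ∀ q ∈ Q, ∫ ω, (z (T * ((q : ℝ) + ε k ω))) ^ 2 ∂μ = etilde q :=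
    fun k q hq => ((hzsq_id k q).integral_eq).trans (hetil q hq)
  have hzz : ∀ k : Fin K,
      (fun ω => (z (T * (((0 : ℤ) : ℝ) + ε k ω))) ^ 2) = fun ω => (z (ε k ω * T)) ^ 2 := by
    intro k; funext ω; rw [Int.cast_zero, zero_add, mul_comm]
  have hzsq0_int : ∀ k, Integrable (fun ω => (z (ε k ω * T)) ^ 2) μ := by
    intro k; rw [← hzz k]; exact hzsq_int k 0 h0Q
  have hzsq0_eq : ∀ k, ∫ ω, (z (ε k ω * T)) ^ 2 ∂μ = etilde 0 := by
    intro k; rw [← hzz k]; exact hzsq_eq k 0 h0Q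
  have hz1_id : ∀ k, IdentDistrib (fun ω => z (ε k ω * T)) (fun ω => z (ε k0 ω * T)) μ μ :=
    fun k => (hid k).comp (hz.comp (measurable_mul_const T))
  have hz1_int : ∀ k, Integrable (fun ω => z (ε k ω * T)) μ :=
    fun k => (hz1_id k).integrable_iff.mpr hechi
  have hz1_eq : ∀ k, ∫ ω, z (ε k ω * T) ∂μ = echeck :=
    fun k => ((hz1_id k).integral_eq).trans hech
  -- L² facts
  have hxL2 : ∀ (k) (q : QT), MemLp (x k q.1) 2 μ := fun k q =>
    (memLp_two_iff_integrable_sq (hxm k q.1).aestronglyMeasurable).mpr (hx2i k q.1 q.2)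
  have hnL2 : MemLp n 2 μ := (memLp_two_iff_integrable_sq hnm.aestronglyMeasurable).mpr hn2i
  have hgmeas : ∀ (k) (q : ℤ), Measurable fun ω => G k q (ε k ω) :=
    fun k q => (hGm k q).comp (hεm k)
  have hgL2 : ∀ (k) (q : QT), MemLp (fun ω => G k q.1 (ε k ω)) 2 μ := by
    intro k q
    by_cases hq : q.1 = 0
    · have hzL2 : MemLp (fun ω => z (ε k ω * T)) 2 μ :=
        (memLp_two_iff_integrable_sq
          ((hz.comp ((hεm k).mul_const T)).aestronglyMeasurable)).mpr (hzsq0_int k)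
      have hfe : (fun ω => a * z (ε k ω * T) * b k * h k)
          = fun ω => (a * b k * h k) * z (ε k ω * T) := by funext ω; ring
      have : MemLp (fun ω => a * z (ε k ω * T) * b k * h k - 1) 2 μ := by
        refine MemLp.sub ?_ (memLp_const 1)
        rw [hfe]
        exact hzL2.const_mul _
      simpa only [G, hq, if_true] using this
    · have hzL2 : MemLp (fun ω => z (T * ((q.1 : ℝ) + ε k ω))) 2 μ :=
        (memLp_two_iff_integrable_sq
          ((hz.comp ((measurable_const.add (hεm k)).const_mul T)).aestronglyMeasurable)).mpr
          (hzsq_int k q.1 q.2)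
      have hfe : (fun ω => a * z (T * ((q.1 : ℝ) + ε k ω)) * b k * h k)
          = fun ω => (a * b k * h k) * z (T * ((q.1 : ℝ) + ε k ω)) := by funext ω; ring
      have : MemLp (fun ω => a * z (T * ((q.1 : ℝ) + ε k ω)) * b k * h k) 2 μ := by
        rw [hfe]; exact hzL2.const_mul _
      simpa only [G, hq, if_false] using this
  have hgsq_int : ∀ (k) (q : QT), Integrable (fun ω => (G k q.1 (ε k ω)) ^ 2) μ := fun k q =>
    (memLp_two_iff_integrable_sq (hgmeas k q.1).aestronglyMeasurable).mp (hgL2 k q)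
  have hm2 : Measurable fun r : ℝ => r ^ 2 := measurable_id.pow_const 2
  -- independence of x k q and G k q (ε k ·)
  have hindxg : ∀ (k) (q : QT), IndepFun (x k q.1) (fun ω => G k q.1 (ε k ω)) μ := by
    intro k q
    have hne : (Sum.inl (k, q) : ι) ≠ Sum.inr (Sum.inl k) := by simp
    exact (hindep'.indepFun hne).comp measurable_id (hGm k q.1)
  have hFmeas : ∀ j : J, Measurable (F j) := by
    rintro ((⟨k, q⟩) | u)
    · exact (hxm k q.1).mul (hgmeas k q.1)
    · exact hnm.const_mul a
  have hFL2 : ∀ j : J, MemLp (F j) 2 μ := by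
    rintro ((⟨k, q⟩) | u)
    · rw [show F (Sum.inl (k, q)) = fun ω => x k q.1 ω * G k q.1 (ε k ω) from rfl,
        memLp_two_iff_integrable_sq (f := fun ω => x k q.1 ω * G k q.1 (ε k ω)) ((hxm k q.1).mul (hgmeas k q.1)).aestronglyMeasurable]
      have heq : (fun ω => (x k q.1 ω * G k q.1 (ε k ω)) ^ 2)
          = fun ω => (x k q.1 ω) ^ 2 * (G k q.1 (ε k ω)) ^ 2 := by
        funext ω; ring
      rw [heq]
      exact ((hindxg k q).comp hm2 hm2).integrable_mul (hx2i k q.1 q.2) (hgsq_int k q)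
    · exact hnL2.const_mul a
  have hFprod : ∀ j j' : J, Integrable (fun ω => F j ω * F j' ω) μ :=
    fun j j' => l2_mul_integrable (hFL2 j) (hFL2 j')
  -- pointwise identity
  have hpt : ∀ ω, a * ((∑ k, x k 0 ω * z (ε k ω * T) * b k * h k) + n ω)
          + a * (∑ q ∈ Q.erase 0, ∑ k, x k q ω * z (T * ((q : ℝ) + ε k ω)) * b k * h k)
          - ∑ k, x k 0 ω = ∑ j : J, F j ω := by
    intro ω
    rw [Fintype.sum_sum_type]
    simp only [Finset.univ_unique, Finset.sum_singleton]
    rw [Fintype.sum_prod_type_right]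
    have e0 : ∑ q : QT, ∑ k, F (Sum.inl (k, q)) ω
        = ∑ q ∈ Q, ∑ k, x k q ω * G k q (ε k ω) := by
      rw [← Finset.sum_coe_sort Q (fun q => ∑ k, x k q ω * G k q (ε k ω))]
      rfl
    rw [e0, ← Finset.add_sum_erase Q _ h0Q]
    have e1 : ∑ k, x k (0 : ℤ) ω * G k 0 (ε k ω)
        = a * (∑ k, x k 0 ω * z (ε k ω * T) * b k * h k) - ∑ k, x k 0 ω := by
      rw [Finset.mul_sum, ← Finset.sum_sub_distrib]
      refine Finset.sum_congr rfl fun k _ => ?_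
      simp only [G, if_true]
      ring
    have e2 : ∑ q ∈ Q.erase 0, ∑ k, x k q ω * G k q (ε k ω)
        = ∑ q ∈ Q.erase 0, a * ∑ k, x k q ω * z (T * ((q : ℝ) + ε k ω)) * b k * h k := by
      refine Finset.sum_congr rfl fun q hq => ?_
      have hq0 : q ≠ 0 := (Finset.mem_erase.mp hq).1
      rw [Finset.mul_sum]
      refine Finset.sum_congr rfl fun k _ => ?_
      simp only [G, hq0, if_false]
      ring
    rw [e1, e2, ← Finset.mul_sum]
    show _ = _ + _ + a * n ω
    ring
  -- cross terms vanish
  have hcross : ∀ j j' : J, j ≠ j' → ∫ ω, F j ω * F j' ω ∂μ = 0 := by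
    rintro ((⟨k, q⟩) | u) ((⟨k', q'⟩) | u') hne
    · have hpp : ((k, q) : Fin K × QT) ≠ (k', q') := fun hc => hne (by rw [hc])
      have hIF := indep_single hindep' hYm (Sum.inl (k, q) : ι)
        ![Sum.inr (Sum.inl k), Sum.inl (k', q'), Sum.inr (Sum.inl k')]
        (by
          intro t
          fin_cases t
          · exact fun hc => by simp at hc
          · exact fun hc => hpp (Sum.inl.inj hc).symm
          · exact fun hc => by simp at hc)
        (fun v => G k q.1 (v 0) * (v 1 * G k' q'.1 (v 2)))
        (((hGm k q.1).comp (measurable_pi_apply 0)).mul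
          ((measurable_pi_apply 1).mul ((hGm k' q'.1).comp (measurable_pi_apply 2))))
      have hre : (fun ω => F (Sum.inl (k, q)) ω * F (Sum.inl (k', q')) ω)
          = fun ω => x k q.1 ω *
            (G k q.1 (ε k ω) * (x k' q'.1 ω * G k' q'.1 (ε k' ω))) := by
        funext ω; show (x k q.1 ω * G k q.1 (ε k ω)) * (x k' q'.1 ω * G k' q'.1 (ε k' ω)) = _
        ring
      rw [hre]
      have := hIF.integral_fun_mul_eq_mul_integral (hxm k q.1).aestronglyMeasurable
        (((hgmeas k q.1).mul ((hxm k' q'.1).mul (hgmeas k' q'.1))).aestronglyMeasurable)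
      rw [show (fun ω => x k q.1 ω * (G k q.1 (ε k ω) * (x k' q'.1 ω * G k' q'.1 (ε k' ω))))
          = fun ω => Y (Sum.inl (k, q)) ω *
            ((fun v : Fin 3 → ℝ => G k q.1 (v 0) * (v 1 * G k' q'.1 (v 2)))
              fun t => Y (![Sum.inr (Sum.inl k), Sum.inl (k', q'), Sum.inr (Sum.inl k')] t) ω)
          from rfl, this]
      rw [show (∫ ω, Y (Sum.inl (k, q)) ω ∂μ) = ∫ ω, x k q.1 ω ∂μ from rfl, hx1 k q.1 q.2,
        zero_mul]
    · -- x term against noise term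
      have hIF := indep_single hindep' hYm (Sum.inl (k, q) : ι)
        ![Sum.inr (Sum.inl k), Sum.inr (Sum.inr ())]
        (by
          intro t
          fin_cases t
          · exact fun hc => by simp at hc
          · exact fun hc => by simp at hc)
        (fun v => G k q.1 (v 0) * (a * v 1))
        (((hGm k q.1).comp (measurable_pi_apply 0)).mul ((measurable_pi_apply (X := fun _ : Fin 2 => ℝ) 1).const_mul a))
      have hre : (fun ω => F (Sum.inl (k, q)) ω * F (Sum.inr u') ω)
          = fun ω => x k q.1 ω * (G k q.1 (ε k ω) * (a * n ω)) := by
        funext ω; show (x k q.1 ω * G k q.1 (ε k ω)) * (a * n ω) = _; ring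
      rw [hre]
      have := hIF.integral_fun_mul_eq_mul_integral (hxm k q.1).aestronglyMeasurable
        ((hgmeas k q.1).mul (hnm.const_mul a)).aestronglyMeasurable
      rw [show (fun ω => x k q.1 ω * (G k q.1 (ε k ω) * (a * n ω)))
          = fun ω => Y (Sum.inl (k, q)) ω *
            ((fun v : Fin 2 → ℝ => G k q.1 (v 0) * (a * v 1))
              fun t => Y (![Sum.inr (Sum.inl k), Sum.inr (Sum.inr ())] t) ω) from rfl, this]
      rw [show (∫ ω, Y (Sum.inl (k, q)) ω ∂μ) = ∫ ω, x k q.1 ω ∂μ from rfl, hx1 k q.1 q.2,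
        zero_mul]
    · -- noise term against x term
      have hIF := indep_single hindep' hYm (Sum.inr (Sum.inr ()) : ι)
        ![Sum.inl (k', q'), Sum.inr (Sum.inl k')]
        (by
          intro t
          fin_cases t
          · exact fun hc => by simp at hc
          · exact fun hc => by simp at hc; cases hc)
        (fun v => a * (v 0 * G k' q'.1 (v 1)))
        (((measurable_pi_apply (X := fun _ : Fin 2 => ℝ) 0).mul ((hGm k' q'.1).comp (measurable_pi_apply 1))).const_mul a)
      have hre : (fun ω => F (Sum.inr u) ω * F (Sum.inl (k', q')) ω)
          = fun ω => n ω * (a * (x k' q'.1 ω * G k' q'.1 (ε k' ω))) := by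
        funext ω; show (a * n ω) * (x k' q'.1 ω * G k' q'.1 (ε k' ω)) = _; ring
      rw [hre]
      have := hIF.integral_fun_mul_eq_mul_integral hnm.aestronglyMeasurable
        (((hxm k' q'.1).mul (hgmeas k' q'.1)).const_mul a).aestronglyMeasurable
      rw [show (fun ω => n ω * (a * (x k' q'.1 ω * G k' q'.1 (ε k' ω))))
          = fun ω => Y (Sum.inr (Sum.inr ()) : ι) ω *
            ((fun v : Fin 2 → ℝ => a * (v 0 * G k' q'.1 (v 1)))
              fun t => Y (![Sum.inl (k', q'), Sum.inr (Sum.inl k')] t) ω) from rfl, this]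
      rw [show (∫ ω, Y (Sum.inr (Sum.inr ()) : ι) ω ∂μ) = ∫ ω, n ω ∂μ from rfl, hn1, zero_mul]
    · exact absurd rfl hne
  -- diagonal terms
  let D : J → ℝ := Sum.elim
    (fun p => (a * b p.1 * h p.1) ^ 2 * etilde p.2.1
      + (if p.2.1 = 0 then 1 - 2 * (a * b p.1 * h p.1) * echeck else 0))
    (fun _ => σ ^ 2 * a ^ 2)
  have hdiag : ∀ j : J, ∫ ω, F j ω * F j ω ∂μ = D j := by
    rintro ((⟨k, q⟩) | u)
    · have hre : (fun ω => F (Sum.inl (k, q)) ω * F (Sum.inl (k, q)) ω)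
          = fun ω => (x k q.1 ω) ^ 2 * (G k q.1 (ε k ω)) ^ 2 := by
        funext ω
        show (x k q.1 ω * G k q.1 (ε k ω)) * (x k q.1 ω * G k q.1 (ε k ω)) = _
        ring
      rw [hre]
      have hisq := (hindxg k q).comp hm2
        hm2
      rw [show (fun ω => (x k q.1 ω) ^ 2 * (G k q.1 (ε k ω)) ^ 2)
          = fun ω => ((fun r : ℝ => r ^ 2) ∘ x k q.1) ω
            * ((fun r : ℝ => r ^ 2) ∘ fun ω => G k q.1 (ε k ω)) ω from rfl,
        hisq.integral_fun_mul_eq_mul_integral (((hxm k q.1).pow_const 2).aestronglyMeasurable)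
          (((hgmeas k q.1).pow_const 2).aestronglyMeasurable)]
      rw [show (∫ ω, ((fun r : ℝ => r ^ 2) ∘ x k q.1) ω ∂μ) = ∫ ω, (x k q.1 ω) ^ 2 ∂μ from rfl,
        hx2 k q.1 q.2, one_mul]
      by_cases hq : q.1 = 0
      · have hgr : ((fun r : ℝ => r ^ 2) ∘ fun ω => G k q.1 (ε k ω))
            = fun ω => (a * b k * h k) ^ 2 * (z (ε k ω * T)) ^ 2
              - 2 * (a * b k * h k) * z (ε k ω * T) + 1 := by
          funext ω
          show (G k q.1 (ε k ω)) ^ 2 = _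
          simp only [G, hq, if_true]
          ring
        rw [hgr, integral_add, integral_sub, integral_const_mul, integral_const_mul,
          hzsq0_eq k, hz1_eq k, integral_const]
        · simp only [D, Sum.elim_inl, hq, if_true, probReal_univ, ENNReal.toReal_one, smul_eq_mul,
            mul_one]
          ring
        · exact ((hzsq0_int k).const_mul _)
        · exact ((hz1_int k).const_mul _)
        · exact (((hzsq0_int k).const_mul _).sub ((hz1_int k).const_mul _))
        · exact integrable_const 1
      · have hgr : ((fun r : ℝ => r ^ 2) ∘ fun ω => G k q.1 (ε k ω))
            = fun ω => (a * b k * h k) ^ 2 * (z (T * ((q.1 : ℝ) + ε k ω))) ^ 2 := by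
          funext ω
          show (G k q.1 (ε k ω)) ^ 2 = _
          simp only [G, hq, if_false]
          ring
        rw [hgr, integral_const_mul, hzsq_eq k q.1 q.2]
        simp only [D, Sum.elim_inl, hq, if_false, add_zero]
    · have hre : (fun ω => F (Sum.inr u) ω * F (Sum.inr u) ω)
          = fun ω => a ^ 2 * (n ω) ^ 2 := by
        funext ω; show (a * n ω) * (a * n ω) = _; ring
      rw [hre, integral_const_mul, hn2]
      show a ^ 2 * σ ^ 2 = σ ^ 2 * a ^ 2
      ring
  -- assemble
  have h1 : ∫ ω, (a * ((∑ k, x k 0 ω * z (ε k ω * T) * b k * h k) + n ω)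
          + a * (∑ q ∈ Q.erase 0, ∑ k, x k q ω * z (T * ((q : ℝ) + ε k ω)) * b k * h k)
          - ∑ k, x k 0 ω) ^ 2 ∂μ = ∫ ω, (∑ j : J, F j ω) ^ 2 ∂μ := by
    refine integral_congr_ae (Filter.Eventually.of_forall fun ω => ?_)
    exact congrArg (fun r : ℝ => r ^ 2) (hpt ω)
  refine h1.trans ?_
  have h2 : ∫ ω, (∑ j : J, F j ω) ^ 2 ∂μ = ∑ j : J, ∑ j' : J, ∫ ω, F j ω * F j' ω ∂μ := by
    have hexp : (fun ω => (∑ j : J, F j ω) ^ 2)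
        = fun ω => ∑ j : J, ∑ j' : J, F j ω * F j' ω := by
      funext ω; rw [sq, Finset.sum_mul_sum]
    rw [hexp, integral_finset_sum _
      (fun j _ => integrable_finset_sum _ (fun j' _ => hFprod j j'))]
    exact Finset.sum_congr rfl fun j _ =>
      integral_finset_sum _ (fun j' _ => hFprod j j')
  rw [h2]
  have h3 : ∀ j : J, ∑ j' : J, ∫ ω, F j ω * F j' ω ∂μ = D j := by
    intro j
    rw [Finset.sum_eq_single_of_mem j (Finset.mem_univ j)
      (fun j' _ hj' => hcross j j' (fun hc => hj' hc.symm))]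
    exact hdiag j
  rw [Finset.sum_congr rfl fun j _ => h3 j]
  -- compute ∑ j, D j
  rw [Fintype.sum_sum_type]
  simp only [Finset.univ_unique, Finset.sum_singleton]
  have e5 : (∑ q : QT, ∑ k, D (Sum.inl (k, q)))
      = ∑ q ∈ Q, ∑ k : Fin K, ((a * b k * h k) ^ 2 * etilde q
        + (if q = 0 then 1 - 2 * (a * b k * h k) * echeck else 0)) := by
    rw [← Finset.sum_coe_sort Q (fun q => ∑ k : Fin K, ((a * b k * h k) ^ 2 * etilde q
      + (if q = 0 then 1 - 2 * (a * b k * h k) * echeck else 0)))]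
    rfl
  rw [Fintype.sum_prod_type_right, e5, ← Finset.add_sum_erase Q _ h0Q]
  have e3 : ∑ k : Fin K, ((a * b k * h k) ^ 2 * etilde (0 : ℤ)
      + (if (0 : ℤ) = 0 then 1 - 2 * (a * b k * h k) * echeck else 0))
      = (∑ k : Fin K, ((a * b k * h k) ^ 2 * etilde 0 + 1))
        - 2 * (∑ k : Fin K, a * b k * h k * echeck) := by
    rw [Finset.mul_sum, ← Finset.sum_sub_distrib]
    refine Finset.sum_congr rfl fun k _ => ?_
    simp only [if_true]
    ring
  have e4 : ∑ q ∈ Q.erase 0, ∑ k : Fin K, ((a * b k * h k) ^ 2 * etilde q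
      + (if q = 0 then 1 - 2 * (a * b k * h k) * echeck else 0))
      = ∑ q ∈ Q.erase 0, ∑ k : Fin K, (a * b k * h k) ^ 2 * etilde q := by
    refine Finset.sum_congr rfl fun q hq => ?_
    have hq0 : q ≠ 0 := (Finset.mem_erase.mp hq).1
    refine Finset.sum_congr rfl fun k _ => ?_
    simp [hq0]
  rw [e3, e4]
  show _ + _ + σ ^ 2 * a ^ 2 = _
  ring
end
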